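/- arXiv:math/0206169 — 5 statements merged into one kernel-verified Lean document; each statement's English description precedes it below -/
import Mathlib

section
/- An involution of length n avoiding the pattern 132 is an even permutation if and only if its number of fixed points is congruent to n modulo 4. -/
open Finset

/-- The number of occurrences of the pattern `τ` (of length `k`) in the
permutation `π` (of length `n`): the number of strictly increasing index
sequences along which `π` is order-isomorphic to `τ`. -/
def occ {k n : ℕ} (τ : Equiv.Perm (Fin k)) (π : Equiv.Perm (Fin n)) : ℕ :=
  (Finset.univ.filter (fun f : Fin k → Fin n =>
    (∀ a b : Fin k, a < b → f a < f b) ∧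
    (∀ a b : Fin k, τ a < τ b ↔ π (f a) < π (f b)))).card

/-- The number of inversions of a permutation: pairs `i < j` with `π i > π j`. -/
def inversions {n : ℕ} (π : Equiv.Perm (Fin n)) : ℕ :=
  (Finset.univ.filter (fun p : Fin n × Fin n => p.1 < p.2 ∧ π p.2 < π p.1)).card

/-- The number of fixed points of a permutation. -/
def fixedPointCount {n : ℕ} (π : Equiv.Perm (Fin n)) : ℕ :=
  (Finset.univ.filter (fun j : Fin n => π j = j)).card

/-- The pattern `132` as a permutation of `Fin 3` (zero-indexed values `0,2,1`). -/
def p132 : Equiv.Perm (Fin 3) := Equiv.swap 1 2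

lemma sign_eq_signAux {n : ℕ} (f : Equiv.Perm (Fin n)) :
    Equiv.Perm.sign f = Equiv.Perm.signAux f := by
  have key : ∀ (s : Multiset (Fin n)) (hs : ∀ x, x ∈ s),
      Equiv.Perm.signAux3 f hs = Equiv.Perm.signAux f := by
    intro s
    induction s using Quotient.inductionOn with
    | _ l =>
      intro hs
      show Equiv.Perm.signAux2 l f = _
      rw [← Equiv.Perm.signAux_eq_signAux2 l f (Equiv.refl (Fin n)) (fun x _ => hs x)]
      congr 1
  have hs : Equiv.Perm.sign f = Equiv.Perm.signAux3 f Finset.mem_univ := rfl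
  rw [hs]
  exact key _ _

lemma sign_eq_pow_inversions {n : ℕ} (f : Equiv.Perm (Fin n)) :
    Equiv.Perm.sign f = (-1 : ℤˣ) ^ (inversions f) := by
  rw [sign_eq_signAux, Equiv.Perm.signAux]
  rw [Finset.prod_ite, Finset.prod_const, Finset.prod_const, one_pow, mul_one]
  congr 1
  refine Finset.card_bij' (fun x _ => (x.2, x.1)) (fun p _ => (⟨p.2, p.1⟩ : Σ _ : Fin n, Fin n))
    ?_ ?_ (fun a ha => rfl) (fun a ha => rfl)
  · intro x hx
    simp only [Finset.mem_filter, Equiv.Perm.mem_finPairsLT] at hx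
    simp only [Finset.mem_filter, Finset.mem_univ, true_and]
    refine ⟨hx.1, lt_of_le_of_ne hx.2 ?_⟩
    intro h
    exact absurd (f.injective h) (ne_of_gt hx.1)
  · intro p hp
    simp only [Finset.mem_filter, Finset.mem_univ, true_and] at hp
    simp only [Finset.mem_filter, Equiv.Perm.mem_finPairsLT]
    exact ⟨hp.1, le_of_lt hp.2⟩

/-- A 132-avoiding involution of length n is even iff its number of fixed
points is congruent to n mod 4. -/
theorem even_iff_fixedPoints_mod_four (n : ℕ) (π : Equiv.Perm (Fin n))
    (hinv : ∀ i, π (π i) = i) (havoid : occ p132 π = 0) :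
    Even (inversions π) ↔ fixedPointCount π % 4 = n % 4 := by
  have h2 : π ^ 2 = 1 := by
    ext i
    simp [pow_two, Equiv.Perm.mul_apply, hinv i]
  have hcyc : ∀ a ∈ π.cycleType, a = 2 := by
    intro a ha
    have hd : a ∣ 2 := (Equiv.Perm.dvd_of_mem_cycleType ha).trans
      (orderOf_dvd_of_pow_eq_one h2)
    have h2a := Equiv.Perm.two_le_of_mem_cycleType ha
    exact le_antisymm (Nat.le_of_dvd (by norm_num) hd) h2a
  set m := Multiset.card π.cycleType with hm
  have hrep : π.cycleType = Multiset.replicate m 2 :=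
    (Multiset.eq_replicate_card).2 hcyc
  have hsum : π.cycleType.sum = 2 * m := by
    rw [hrep, Multiset.sum_replicate, smul_eq_mul, mul_comm]
  have hsign : Equiv.Perm.sign π = (-1 : ℤˣ) ^ m := by
    rw [Equiv.Perm.sign_of_cycleType, hsum, ← hm]
    rw [show 2 * m + m = m + 2 * m from by ring, pow_add]
    simp [pow_mul]
  have hsupp : π.support.card = 2 * m := by
    rw [← Equiv.Perm.sum_cycleType, hsum]
  have hfix : fixedPointCount π + π.support.card = n := by
    rw [fixedPointCount, Equiv.Perm.support]
    have := Finset.card_filter_add_card_filter_not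
      (s := (Finset.univ : Finset (Fin n))) (p := fun j => π j = j)
    simp only [Finset.card_univ, Fintype.card_fin] at this
    simpa using this
  have hiff : Even (inversions π) ↔ Even m := by
    have h1 := sign_eq_pow_inversions π
    rw [hsign] at h1
    rw [← neg_one_pow_eq_one_iff_even (R := ℤˣ) (by decide),
      ← neg_one_pow_eq_one_iff_even (R := ℤˣ) (by decide), h1]
  rw [hiff, Nat.even_iff]
  rw [hsupp] at hfix
  omega
end

section
/- If π is an involution of length n avoiding the pattern 132 and having exactly r rises, where 0 ≤ r < n, then π has exactly n−r left-to-right minima. -/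
open Finset

/-- The number of rises of a permutation: indices j with π j < π (j+1). -/
def rises {n : ℕ} (π : Equiv.Perm (Fin n)) : ℕ :=
  (Finset.univ.filter (fun p : Fin n × Fin n =>
    (p.2 : ℕ) = (p.1 : ℕ) + 1 ∧ π p.1 < π p.2)).card

/-- The number of left-to-right minima of a permutation. -/
def lrMinCount {n : ℕ} (π : Equiv.Perm (Fin n)) : ℕ :=
  (Finset.univ.filter (fun j : Fin n => ∀ i : Fin n, i < j → π j < π i)).card

lemma no132 {n : ℕ} (π : Equiv.Perm (Fin n)) (havoid : occ p132 π = 0)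
    (a b c : Fin n) (hab : a < b) (hbc : b < c)
    (h1 : π a < π c) (h2 : π c < π b) : False := by
  have hempty := Finset.card_eq_zero.mp havoid
  rw [Finset.eq_empty_iff_forall_notMem] at hempty
  apply hempty ![a, b, c]
  simp only [Finset.mem_filter, Finset.mem_univ, true_and]
  have hac : π a < π b := h1.trans h2
  constructor
  · intro x y hxy
    fin_cases x <;> fin_cases y <;>
      simp_all [Matrix.cons_val_zero, Matrix.cons_val_one] <;> omega
  · intro x y
    fin_cases x <;> fin_cases y <;>
      simp [p132, Equiv.swap_apply_def, Matrix.cons_val_zero, Matrix.cons_val_one] <;>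
      first
        | exact hac
        | exact h1
        | exact fun h => absurd h (lt_asymm hac)
        | exact fun h => absurd h (lt_asymm h1)
        | exact fun h => absurd h (lt_asymm h2)
        | exact fun _ => h2
        | omega

/-- A 132-avoiding involution of length n with exactly r rises (0 ≤ r < n) has
exactly n − r left-to-right minima. -/
theorem lrmin_eq_of_rises (n r : ℕ) (π : Equiv.Perm (Fin n))
    (hinv : ∀ i, π (π i) = i) (havoid : occ p132 π = 0)
    (hr : rises π = r) (hrn : r < n) :
    lrMinCount π = n - r := by
  classical
  have key : (univ.filter (fun j : Fin n => ¬ ∀ i : Fin n, i < j → π j < π i)).card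
      = rises π := by
    rw [rises]
    apply Finset.card_bij
      (fun (j : Fin n) (_ : j ∈ univ.filter fun j : Fin n => ¬ ∀ i : Fin n, i < j → π j < π i)
        => ((⟨(j : ℕ) - 1, by omega⟩ : Fin n), j))
    · intro j hj
      simp only [Finset.mem_filter, Finset.mem_univ, true_and] at hj ⊢
      push_neg at hj
      obtain ⟨i, hij, hle⟩ := hj
      -- j is not 0
      have hj0 : (j : ℕ) ≠ 0 := by
        intro h0
        have := Fin.lt_def.mp hij
        omega
      have hij' : π i < π j := by
        rcases lt_or_eq_of_le hle with h | h
        · exact h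
        · exact absurd (π.injective h) (by intro h'; subst h'; exact lt_irrefl _ hij)
      set j' : Fin n := ⟨(j : ℕ) - 1, by omega⟩ with hj'
      have hj'j : j' < j := by simp [Fin.lt_def, hj']; omega
      refine ⟨by show (j:ℕ) = (j:ℕ) - 1 + 1; omega, ?_⟩
      by_contra hnot
      have hne : π j ≠ π j' := fun h => absurd (π.injective h)
        (by intro h'; rw [h'] at hj'j; exact lt_irrefl _ hj'j)
      have hlt : π j < π j' := lt_of_le_of_ne (le_of_not_gt hnot) hne
      rcases lt_or_eq_of_le (Nat.le_sub_one_of_lt (Fin.lt_def.mp hij)) with h | h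
      · exact no132 π havoid i j' j (Fin.lt_def.mpr h) hj'j hij' hlt
      · have : i = j' := Fin.ext h
        rw [this] at hij'
        exact absurd hij' (lt_asymm hlt)
    · intro a ha b hb hab
      exact congrArg Prod.snd hab
    · intro p hp
      simp only [Finset.mem_filter, Finset.mem_univ, true_and] at hp
      obtain ⟨hsucc, hlt⟩ := hp
      refine ⟨p.2, ?_, ?_⟩
      · simp only [Finset.mem_filter, Finset.mem_univ, true_and]
        intro hall
        exact absurd (hall p.1 (Fin.lt_def.mpr (by omega))) (lt_asymm hlt)
      · have : (⟨(p.2 : ℕ) - 1, by omega⟩ : Fin n) = p.1 := Fin.ext (by simp only [Fin.val_mk]; omega)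
        rw [Prod.ext_iff]
        exact ⟨this, rfl⟩
  have hsplit := Finset.card_filter_add_card_filter_not
    (s := (univ : Finset (Fin n))) (p := fun j : Fin n => ∀ i : Fin n, i < j → π j < π i)
  rw [Finset.card_univ, Fintype.card_fin] at hsplit
  rw [lrMinCount]
  omega
end

section
/- For every k ≥ 2 and every n, there is no even involution of length n that contains the pattern 132 exactly once and contains the pattern 12⋯k (the identity pattern of length k) exactly once; likewise, there is no even involution of length n that contains 132 exactly once and contains the pattern 23⋯k1 (i.e. (2,3,…,k,1)) exactly once. -/
open Finset

set_option linter.unusedSectionVars false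
set_option linter.unnecessarySimpa false
set_option maxHeartbeats 1000000

def IsOcc {k n : ℕ} (τ : Equiv.Perm (Fin k)) (π : Equiv.Perm (Fin n)) (f : Fin k → Fin n) : Prop :=
  (∀ a b : Fin k, a < b → f a < f b) ∧
  (∀ a b : Fin k, τ a < τ b ↔ π (f a) < π (f b))

lemma occ_eq_one_iff {k n : ℕ} (τ : Equiv.Perm (Fin k)) (π : Equiv.Perm (Fin n)) :
    occ τ π = 1 ↔ ∃ f, IsOcc τ π f ∧ ∀ g, IsOcc τ π g → g = f := by
  unfold occ
  rw [Finset.card_eq_one]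
  constructor
  · rintro ⟨f, hf⟩
    have hmem : ∀ g : Fin k → Fin n, g ∈ Finset.univ.filter (fun f : Fin k → Fin n =>
        (∀ a b : Fin k, a < b → f a < f b) ∧
        (∀ a b : Fin k, τ a < τ b ↔ π (f a) < π (f b))) ↔ IsOcc τ π g := by
      intro g; simp [Finset.mem_filter, IsOcc]
    refine ⟨f, ?_, ?_⟩
    · rw [← hmem]; rw [hf]; exact Finset.mem_singleton_self f
    · intro g hg
      have : g ∈ ({f} : Finset (Fin k → Fin n)) := by rw [← hf, hmem]; exact hg
      exact Finset.mem_singleton.mp this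
  · rintro ⟨f, hf, huniq⟩
    refine ⟨f, ?_⟩
    ext g
    simp only [Finset.mem_filter, Finset.mem_univ, true_and, Finset.mem_singleton]
    constructor
    · intro hg; exact huniq g hg
    · rintro rfl; exact hf

lemma p132v0 : p132 0 = 0 := by decide
lemma p132v1 : p132 1 = 2 := by decide
lemma p132v2 : p132 2 = 1 := by decide

lemma mk132 {n : ℕ} (π : Equiv.Perm (Fin n)) {x y z : Fin n}
    (h1 : x < y) (h2 : y < z) (h3 : π x < π z) (h4 : π z < π y) :
    IsOcc p132 π ![x, y, z] := by
  have h5 : π x < π y := lt_trans h3 h4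
  constructor
  · intro a b hab
    fin_cases a <;> fin_cases b <;>
      simp only [Matrix.cons_val_zero, Matrix.cons_val_one, Matrix.head_cons,
        Matrix.cons_val_two, Matrix.tail_cons] <;>
      first
        | exact absurd hab (by decide)
        | exact h1 | exact h2 | exact lt_trans h1 h2
  · intro a b
    fin_cases a <;> fin_cases b <;>
      simp only [Matrix.cons_val_zero, Matrix.cons_val_one, Matrix.head_cons,
        Matrix.cons_val_two, Matrix.tail_cons, p132v0, p132v1, p132v2] <;>
      constructor <;> intro h <;>
      first
        | exact absurd h (by decide)
        | exact absurd h (lt_irrefl _)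
        | exact absurd h (lt_asymm h3)
        | exact absurd h (lt_asymm h4)
        | exact absurd h (lt_asymm h5)
        | exact h3 | exact h4 | exact h5
        | decide

lemma ex132 {n : ℕ} {π : Equiv.Perm (Fin n)} {f : Fin 3 → Fin n} (h : IsOcc p132 π f) :
    f 0 < f 1 ∧ f 1 < f 2 ∧ π (f 0) < π (f 2) ∧ π (f 2) < π (f 1) := by
  obtain ⟨h1, h2⟩ := h
  refine ⟨h1 0 1 (by decide), h1 1 2 (by decide), (h2 0 2).mp (by decide), ?_⟩
  have hne : π (f 2) ≠ π (f 1) := by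
    intro he
    exact absurd (π.injective he) (ne_of_gt (h1 1 2 (by decide)))
  have hnlt : ¬ π (f 1) < π (f 2) := fun hc => absurd ((h2 1 2).mpr hc) (by decide)
  exact (lt_or_gt_of_ne hne).resolve_right hnlt

/-- The structure of an involution with a unique 132 occurrence. -/
lemma struct132 {n : ℕ} {π : Equiv.Perm (Fin n)} (hinv : ∀ x, π (π x) = x)
    {f₀ : Fin 3 → Fin n} (hocc : IsOcc p132 π f₀)
    (huniq : ∀ g, IsOcc p132 π g → g = f₀) :
    ∃ i j l : Fin n, i < j ∧ j < l ∧ π i = i ∧ π j = l ∧ π l = j ∧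
      (∀ g, IsOcc p132 π g → g = ![i, j, l]) := by
  obtain ⟨e1, e2, e3, e4⟩ := ex132 hocc
  set x := f₀ 0 with hx
  set y := f₀ 1 with hy
  set z := f₀ 2 with hz
  -- image occurrence
  have himg : IsOcc p132 π ![π x, π z, π y] := by
    refine mk132 π e3 e4 ?_ ?_
    · rw [hinv, hinv]; exact e1
    · rw [hinv, hinv]; exact e2
  have heq := huniq _ himg
  have c0 : π x = x := by
    have := congrFun heq 0; simpa using this
  have c1 : π z = y := by
    have := congrFun heq 1; simpa using this
  have c2 : π y = z := by
    have := congrFun heq 2; simpa using this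
  refine ⟨x, y, z, e1, e2, c0, c2, c1, ?_⟩
  intro g hg
  rw [huniq g hg]
  funext a
  fin_cases a <;> simp [hx, hy, hz]

section facts
variable {n : ℕ} {π : Equiv.Perm (Fin n)} (hinv : ∀ x, π (π x) = x)
variable {i j l : Fin n} (hij : i < j) (hjl : j < l)
variable (hi : π i = i) (hj : π j = l) (hl : π l = j)
variable (huniq : ∀ g, IsOcc p132 π g → g = ![i, j, l])

include hinv hij hjl hi hj hl huniq

lemma eq132 {x y w : Fin n} (h1 : x < y) (h2 : y < w)
    (h3 : π x < π w) (h4 : π w < π y) : x = i ∧ y = j ∧ w = l := by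
  have heq := huniq _ (mk132 π h1 h2 h3 h4)
  refine ⟨?_, ?_, ?_⟩
  · have := congrFun heq 0; simpa using this
  · have := congrFun heq 1; simpa using this
  · have := congrFun heq 2; simpa using this

lemma fixed_classify {p : Fin n} (hp : π p = p) : p = i ∨ l < p := by
  by_contra hcon
  push_neg at hcon
  obtain ⟨hpi, hpl⟩ := hcon
  rcases lt_trichotomy p j with h | h | h
  · exact hpi (eq132 hinv hij hjl hi hj hl huniq h hjl
      (by rw [hp, hl]; exact h) (by rw [hl, hj]; exact hjl)).1
  · rw [h, hj] at hp; exact absurd hp (ne_of_gt hjl)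
  · rcases lt_trichotomy p l with h2 | h2 | h2
    · have e := (eq132 hinv hij hjl hi hj hl huniq (lt_trans hij h) h2
        (by rw [hi, hl]; exact hij)
        (by rw [hl, hp]; exact h)).2.1
      rw [e] at h; exact lt_irrefl j h
    · rw [h2, hl] at hp
      exact absurd hp (ne_of_lt hjl)
    · exact absurd h2 (not_lt.mpr hpl)

lemma acyc_classify {x : Fin n} (hx : x < π x) : x = j ∨ (x < i ∧ j < π x) := by
  by_cases hxj : x = j
  · exact Or.inl hxj
  right
  have hxi : x < i := by
    rcases lt_trichotomy x i with h | h | h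
    · exact h
    · exfalso; rw [← h] at hi; rw [hi] at hx; exact lt_irrefl x hx
    · exfalso
      refine hxj (eq132 hinv hij hjl hi hj hl huniq h hx ?_ ?_).2.1
      · rw [hi, hinv]; exact h
      · rw [hinv]; exact hx
  refine ⟨hxi, ?_⟩
  rcases lt_trichotomy (π x) j with h | h | h
  · have e := (eq132 hinv hij hjl hi hj hl huniq (lt_trans hxi hij) hjl
      (by rw [hl]; exact h) (by rw [hl, hj]; exact hjl)).1
    rw [e] at hxi; exact absurd hxi (lt_irrefl i)
  · exfalso
    have hx' : x = l := by rw [← hinv x, h, hj]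
    rw [hx', hl] at hx
    exact absurd hx (asymm hjl)
  · exact h

lemma bcyc_classify {x : Fin n} (hx : π x < x) : x = l ∨ (π x < i ∧ j < x) := by
  have h2 := acyc_classify hinv hij hjl hi hj hl huniq (x := π x) (by rw [hinv]; exact hx)
  rcases h2 with h | ⟨h1, h2⟩
  · left; rw [← hinv x, h, hj]
  · right; rw [hinv] at h2; exact ⟨h1, h2⟩

lemma val_gap {w : Fin n} (h1 : j < w) (h2 : w < l) : π w < i := by
  rcases lt_trichotomy (π w) w with h | h | h
  · rcases bcyc_classify hinv hij hjl hi hj hl huniq h with he | ⟨hh, _⟩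
    · rw [he] at h2; exact absurd h2 (lt_irrefl l)
    · exact hh
  · rcases fixed_classify hinv hij hjl hi hj hl huniq h with he | hh
    · rw [he] at h1; exact absurd h1 (asymm hij)
    · exact absurd (lt_trans hh h2) (lt_irrefl l)
  · rcases acyc_classify hinv hij hjl hi hj hl huniq h with he | ⟨hh, _⟩
    · rw [he] at h1; exact absurd h1 (lt_irrefl j)
    · exact absurd (lt_trans hh (lt_trans hij h1)) (lt_irrefl w)

lemma small_classify {x : Fin n} (hx : x < i) : x < π x ∧ j < π x := by
  rcases lt_trichotomy (π x) x with h | h | h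
  · rcases bcyc_classify hinv hij hjl hi hj hl huniq h with he | ⟨_, hh⟩
    · rw [he] at hx; exact absurd hx (asymm (lt_trans hij hjl))
    · exact absurd (lt_trans hh hx) (asymm hij)
  · rcases fixed_classify hinv hij hjl hi hj hl huniq h with he | hh
    · rw [he] at hx; exact absurd hx (lt_irrefl i)
    · exact absurd (lt_trans (lt_trans hjl hh) hx) (asymm hij)
  · rcases acyc_classify hinv hij hjl hi hj hl huniq h with he | ⟨_, hh⟩
    · rw [he] at hx; exact absurd hx (asymm hij)
    · exact ⟨h, hh⟩

end facts

lemma mk_id {k n : ℕ} (π : Equiv.Perm (Fin n)) (f : Fin k → Fin n)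
    (h1 : ∀ a b, a < b → f a < f b) (h2 : ∀ a b, a < b → π (f a) < π (f b)) :
    IsOcc 1 π f := by
  refine ⟨h1, fun a b => ?_⟩
  simp only [Equiv.Perm.coe_one, id_eq]
  constructor
  · exact h2 a b
  · intro h
    rcases lt_trichotomy a b with hc | hc | hc
    · exact hc
    · rw [hc] at h; exact absurd h (lt_irrefl _)
    · exact absurd (h2 b a hc) (lt_asymm h)

section goalA
variable {n : ℕ} {π : Equiv.Perm (Fin n)} (hinv : ∀ x, π (π x) = x)
variable {i j l : Fin n} (hij : i < j) (hjl : j < l)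
variable (hi : π i = i) (hj : π j = l) (hl : π l = j)
variable (hfixc : ∀ p : Fin n, π p = p → p = i ∨ l < p)

include hinv hij hjl hi hj hl hfixc

lemma goal_id {k : ℕ} (hk : 2 ≤ k) {f₀ : Fin k → Fin n}
    (hocc : IsOcc 1 π f₀) (huniqI : ∀ g, IsOcc 1 π g → g = f₀) : False := by
  obtain ⟨h1, hpat⟩ := hocc
  have h2 : ∀ a b : Fin k, a < b → π (f₀ a) < π (f₀ b) := by
    intro a b hab
    exact (hpat a b).mp (by simpa using hab)
  -- all points of f₀ are fixed
  have hfix : ∀ a, π (f₀ a) = f₀ a := by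
    have himg : IsOcc 1 π (fun a => π (f₀ a)) :=
      mk_id π _ h2 (fun a b hab => by rw [hinv, hinv]; exact h1 a b hab)
    intro a
    exact congrFun (huniqI _ himg) a
  set z0 : Fin k := ⟨0, by omega⟩ with hz0
  set z1 : Fin k := ⟨1, by omega⟩ with hz1
  have hz01 : z0 < z1 := by simp [hz0, hz1, Fin.lt_def]
  have hbig : ∀ a, a ≠ z0 → f₀ z0 = i → l < f₀ a := by
    intro a ha h0
    rcases hfixc _ (hfix a) with he | he
    · exfalso
      have haz : z0 < a := by
        rcases lt_trichotomy z0 a with h | h | h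
        · exact h
        · exact absurd h.symm ha
        · exact absurd h (by simp [hz0, Fin.lt_def])
      have := h1 z0 a haz
      rw [h0, he] at this
      exact lt_irrefl i this
    · exact he
  by_cases h0 : f₀ z0 = i
  · -- replace index z1 by j
    have hbig' : ∀ a, z1 < a → l < f₀ a := fun a ha =>
      hbig a (fun he => absurd (he ▸ ha) (by simp [hz0, hz1, Fin.lt_def])) h0
    set f' := Function.update f₀ z1 j with hf'
    have hval : ∀ a, a ≠ z1 → f' a = f₀ a := fun a ha => Function.update_of_ne ha _ _
    have hv1 : f' z1 = j := Function.update_self _ _ _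
    have hlow : ∀ a, a < z1 → a = z0 := by
      intro a ha
      apply Fin.ext
      have := (Fin.lt_def).mp ha
      simp [hz1] at this
      simp [hz0]; omega
    have hne1 : z1 ≠ z0 := ne_of_gt hz01
    have hocc' : IsOcc 1 π f' := by
      apply mk_id
      · intro a b hab
        rcases eq_or_ne b z1 with rfl | hb
        · rw [hv1, hval a (ne_of_lt hab), hlow a hab, h0]; exact hij
        · rcases eq_or_ne a z1 with rfl | ha
          · rw [hv1, hval b hb]
            exact lt_trans hjl (hbig' b hab)
          · rw [hval a ha, hval b hb]; exact h1 a b hab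
      · intro a b hab
        rcases eq_or_ne b z1 with rfl | hb
        · rw [hv1, hval a (ne_of_lt hab), hlow a hab, h0, hj, hi]
          exact lt_trans hij hjl
        · rcases eq_or_ne a z1 with rfl | ha
          · rw [hv1, hval b hb, hj, hfix]
            exact hbig' b hab
          · rw [hval a ha, hval b hb]; exact h2 a b hab
    have := congrFun (huniqI _ hocc') z1
    rw [hv1] at this
    have hb1 : l < f₀ z1 := hbig z1 hne1 h0
    rw [← this] at hb1
    exact absurd (lt_trans hjl hb1) (lt_irrefl j)
  · -- replace index z0 by i
    have hbig' : ∀ a, a ≠ z0 → l < f₀ a := by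
      intro a ha
      rcases hfixc _ (hfix a) with he | he
      · exfalso
        have haz : z0 < a := by
          rcases lt_trichotomy z0 a with h | h | h
          · exact h
          · exact absurd h.symm ha
          · exact absurd h (by simp [hz0, Fin.lt_def])
        have h3 := h1 z0 a haz
        rw [he] at h3
        rcases hfixc _ (hfix z0) with hf | hf
        · exact h0 hf
        · exact absurd (lt_trans (lt_trans hij hjl) (lt_trans hf h3)) (lt_irrefl i)
      · exact he
    set f' := Function.update f₀ z0 i with hf'
    have hval : ∀ a, a ≠ z0 → f' a = f₀ a := fun a ha => Function.update_of_ne ha _ _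
    have hv0 : f' z0 = i := Function.update_self _ _ _
    have hocc' : IsOcc 1 π f' := by
      apply mk_id
      · intro a b hab
        have hb : b ≠ z0 := by
          intro he
          rw [he] at hab
          exact absurd hab (by simp [hz0, Fin.lt_def])
        rcases eq_or_ne a z0 with rfl | ha
        · rw [hv0, hval b hb]
          exact lt_trans (lt_trans hij hjl) (hbig' b hb)
        · rw [hval a ha, hval b hb]; exact h1 a b hab
      · intro a b hab
        have hb : b ≠ z0 := by
          intro he
          rw [he] at hab
          exact absurd hab (by simp [hz0, Fin.lt_def])
        rcases eq_or_ne a z0 with rfl | ha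
        · rw [hv0, hval b hb, hi, hfix]
          exact lt_trans (lt_trans hij hjl) (hbig' b hb)
        · rw [hval a ha, hval b hb]; exact h2 a b hab
    have := congrFun (huniqI _ hocc') z0
    rw [hv0] at this
    exact h0 this.symm

end goalA

lemma mk_rot2 {n : ℕ} (π : Equiv.Perm (Fin n)) {x y : Fin n}
    (h1 : x < y) (h2 : π y < π x) : IsOcc (finRotate 2) π ![x, y] := by
  constructor
  · intro a b hab
    fin_cases a <;> fin_cases b <;>
      first
        | exact absurd hab (by decide)
        | simpa using h1
  · intro a b
    fin_cases a <;> fin_cases b <;>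
      simp only [Matrix.cons_val_zero, Matrix.cons_val_one, Matrix.head_cons] <;>
      constructor <;> intro h <;>
      first
        | exact absurd h (by decide)
        | exact absurd h (lt_irrefl _)
        | exact absurd h (lt_asymm h2)
        | exact h2
        | decide

lemma goal_rot2 {n : ℕ} {π : Equiv.Perm (Fin n)} (heven : Even (inversions π))
    {f₀ : Fin 2 → Fin n} (hocc : IsOcc (finRotate 2) π f₀)
    (huniq : ∀ g, IsOcc (finRotate 2) π g → g = f₀) : False := by
  have e1 : f₀ 0 < f₀ 1 := hocc.1 0 1 (by decide)
  have e2 : π (f₀ 1) < π (f₀ 0) := (hocc.2 1 0).mp (by decide)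
  have hS : (Finset.univ.filter
      (fun p : Fin n × Fin n => p.1 < p.2 ∧ π p.2 < π p.1)) = {(f₀ 0, f₀ 1)} := by
    ext p
    simp only [Finset.mem_filter, Finset.mem_univ, true_and, Finset.mem_singleton]
    constructor
    · rintro ⟨hp1, hp2⟩
      have := huniq _ (mk_rot2 π hp1 hp2)
      have c0 := congrFun this 0
      have c1 := congrFun this 1
      simp only [Matrix.cons_val_zero, Matrix.cons_val_one, Matrix.head_cons] at c0 c1
      exact Prod.ext c0 c1
    · rintro rfl
      exact ⟨e1, e2⟩
  have : inversions π = 1 := by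
    unfold inversions
    rw [hS, Finset.card_singleton]
  rw [this] at heven
  simpa using heven

section rot
variable {n m : ℕ} {π : Equiv.Perm (Fin n)}

lemma frv (a : Fin (m + 1)) :
    (finRotate (m + 1) a).val = if a = Fin.last m then 0 else a.val + 1 := by
  rw [finRotate_succ_apply]
  exact Fin.val_add_one a

lemma rot_lt_iff {a b : Fin (m + 1)} (ha : a ≠ Fin.last m) (hb : b ≠ Fin.last m) :
    finRotate (m + 1) a < finRotate (m + 1) b ↔ a < b := by
  rw [Fin.lt_def, Fin.lt_def, frv, frv, if_neg ha, if_neg hb]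
  omega

lemma rot_last_lt {a : Fin (m + 1)} (ha : a ≠ Fin.last m) :
    finRotate (m + 1) (Fin.last m) < finRotate (m + 1) a := by
  rw [Fin.lt_def, frv, frv, if_pos rfl, if_neg ha]
  omega

lemma not_rot_lt_last (a : Fin (m + 1)) :
    ¬ finRotate (m + 1) a < finRotate (m + 1) (Fin.last m) := by
  rw [Fin.lt_def, frv, frv, if_pos rfl]
  omega

lemma mk_rot (π : Equiv.Perm (Fin n)) (f : Fin (m + 1) → Fin n)
    (h1 : ∀ a b, a < b → f a < f b)
    (h2 : ∀ a b, a < b → b ≠ Fin.last m → π (f a) < π (f b))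
    (h3 : ∀ a, a ≠ Fin.last m → π (f (Fin.last m)) < π (f a)) :
    IsOcc (finRotate (m + 1)) π f := by
  refine ⟨h1, fun a b => ?_⟩
  rcases eq_or_ne a (Fin.last m) with rfl | ha
  · rcases eq_or_ne b (Fin.last m) with rfl | hb
    · exact iff_of_false (lt_irrefl _) (lt_irrefl _)
    · exact iff_of_true (rot_last_lt hb) (h3 b hb)
  · rcases eq_or_ne b (Fin.last m) with rfl | hb
    · exact iff_of_false (not_rot_lt_last a) (fun h => absurd (h3 a ha) (lt_asymm h))
    · rw [rot_lt_iff ha hb]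
      constructor
      · intro h; exact h2 a b h hb
      · intro h
        rcases lt_trichotomy a b with hc | hc | hc
        · exact hc
        · rw [hc] at h; exact absurd h (lt_irrefl _)
        · exact absurd (h2 b a hc ha) (lt_asymm h)

variable {f₀ : Fin (m + 1) → Fin n}
variable (h1 : ∀ a b : Fin (m + 1), a < b → f₀ a < f₀ b)
variable (h2 : ∀ a b : Fin (m + 1), a < b → b ≠ Fin.last m → π (f₀ a) < π (f₀ b))
variable (h3 : ∀ a : Fin (m + 1), a ≠ Fin.last m → π (f₀ (Fin.last m)) < π (f₀ a))
variable (huniqR : ∀ g, IsOcc (finRotate (m + 1)) π g → g = f₀)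

include h1 h2 h3 huniqR

lemma U2 (w : Fin n)
    (c1 : ∀ a, a ≠ Fin.last m → f₀ a < w)
    (c2 : ∀ a, a ≠ Fin.last m → π w < π (f₀ a))
    (c3 : w ≠ f₀ (Fin.last m)) : False := by
  set L := Fin.last m
  set f' := Function.update f₀ L w with hf'
  have hvL : f' L = w := Function.update_self _ _ _
  have hval : ∀ a, a ≠ L → f' a = f₀ a := fun a ha => Function.update_of_ne ha _ _
  have hne : ∀ a b : Fin (m+1), a < b → a ≠ L ∨ b ≠ L := by
    intro a b hab
    left; intro he; rw [he] at hab
    have := (Fin.lt_def).mp hab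
    simp [L, Fin.last] at this
    omega
  have hocc' : IsOcc (finRotate (m+1)) π f' := by
    apply mk_rot
    · intro a b hab
      have haL : a ≠ L := by
        intro he; rw [he] at hab
        have := (Fin.lt_def).mp hab
        simp [L, Fin.last] at this; omega
      rcases eq_or_ne b L with rfl | hb
      · rw [hvL, hval a haL]; exact c1 a haL
      · rw [hval a haL, hval b hb]; exact h1 a b hab
    · intro a b hab hb
      have haL : a ≠ L := by
        intro he; rw [he] at hab
        have := (Fin.lt_def).mp hab
        simp [L, Fin.last] at this; omega
      rw [hval a haL, hval b hb]; exact h2 a b hab hb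
    · intro a ha
      rw [hvL, hval a ha]; exact c2 a ha
  have := congrFun (huniqR _ hocc') L
  rw [hvL] at this
  exact c3 this

lemma U1 (t : Fin (m+1)) (w : Fin n) (ht : t ≠ Fin.last m)
    (c1 : ∀ a, a < t → f₀ a < w)
    (c2 : ∀ a, t < a → w < f₀ a)
    (c3 : ∀ a, a < t → π (f₀ a) < π w)
    (c4 : ∀ a, t < a → a ≠ Fin.last m → π w < π (f₀ a))
    (c5 : π (f₀ (Fin.last m)) < π w)
    (c6 : w ≠ f₀ t) : False := by
  set L := Fin.last m
  set f' := Function.update f₀ t w with hf'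
  have hvt : f' t = w := Function.update_self _ _ _
  have hval : ∀ a, a ≠ t → f' a = f₀ a := fun a ha => Function.update_of_ne ha _ _
  have hocc' : IsOcc (finRotate (m+1)) π f' := by
    apply mk_rot
    · intro a b hab
      rcases eq_or_ne a t with rfl | haT
      · rw [hvt, hval b (ne_of_gt hab)]; exact c2 b hab
      · rcases eq_or_ne b t with rfl | hbT
        · rw [hvt, hval a haT]; exact c1 a hab
        · rw [hval a haT, hval b hbT]; exact h1 a b hab
    · intro a b hab hb
      rcases eq_or_ne a t with rfl | haT
      · rw [hvt, hval b (ne_of_gt hab)]; exact c4 b hab hb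
      · rcases eq_or_ne b t with rfl | hbT
        · rw [hvt, hval a haT]; exact c3 a hab
        · rw [hval a haT, hval b hbT]; exact h2 a b hab hb
    · intro a ha
      have hLt : f' L = f₀ L := hval L (Ne.symm ht)
      rcases eq_or_ne a t with rfl | haT
      · rw [hvt, hLt]; exact c5
      · rw [hval a haT, hLt]; exact h3 a ha
  have := congrFun (huniqR _ hocc') t
  rw [hvt] at this
  exact c6 this

lemma MIR (hinv : ∀ x, π (π x) = x) (hm : 2 ≤ m)
    (Lm1 z0 : Fin (m+1)) (hLm1v : Lm1.val = m - 1) (hz0v : z0.val = 0)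
    (hm1 : π (f₀ Lm1) < f₀ (Fin.last m))
    (hm2 : π (f₀ (Fin.last m)) < f₀ z0)
    (hm3 : π (f₀ z0) ≠ f₀ z0) : False := by
  set L := Fin.last m
  have hLm1L : Lm1 ≠ L := by
    intro he; rw [Fin.ext_iff] at he; simp [L, Fin.last] at he; omega
  set f' : Fin (m+1) → Fin n := fun a => if a = L then f₀ L else π (f₀ a) with hf'
  have hvL : f' L = f₀ L := if_pos rfl
  have hval : ∀ a, a ≠ L → f' a = π (f₀ a) := fun a ha => if_neg ha
  have hocc' : IsOcc (finRotate (m+1)) π f' := by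
    apply mk_rot
    · intro a b hab
      have haL : a ≠ L := by
        intro he; rw [he] at hab
        have := (Fin.lt_def).mp hab
        simp [L, Fin.last] at this; omega
      rcases eq_or_ne b L with rfl | hb
      · rw [hvL, hval a haL]
        rcases eq_or_ne a Lm1 with rfl | haLm1
        · exact hm1
        · have haLm1' : a < Lm1 := by
            rw [Fin.lt_def, hLm1v]
            have h1' : a.val < m := by
              rcases Nat.lt_or_ge a.val m with h | h
              · exact h
              · exfalso
                refine haL (Fin.ext ?_)
                have := a.isLt
                simp [L, Fin.last]; omega
            have h2' : a.val ≠ m - 1 := by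
              intro he
              exact haLm1 (Fin.ext (by rw [hLm1v]; omega))
            omega
          exact lt_trans (h2 a Lm1 haLm1' hLm1L) hm1
      · rw [hval a haL, hval b hb]; exact h2 a b hab hb
    · intro a b hab hb
      have haL : a ≠ L := by
        intro he; rw [he] at hab
        have := (Fin.lt_def).mp hab
        simp [L, Fin.last] at this; omega
      rw [hval a haL, hval b hb, hinv, hinv]
      exact h1 a b hab
    · intro a ha
      rw [hvL, hval a ha, hinv]
      rcases eq_or_ne a z0 with rfl | ha0
      · exact hm2
      · have : z0 < a := by
          rw [Fin.lt_def, hz0v]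
          have : a.val ≠ 0 := by
            intro he; exact ha0 (Fin.ext (by rw [hz0v]; omega))
          omega
        exact lt_trans hm2 (h1 z0 a this)
  have := congrFun (huniqR _ hocc') z0
  have hz0L : z0 ≠ L := by
    intro he; rw [Fin.ext_iff] at he; simp [L, Fin.last] at he; omega
  rw [hval z0 hz0L] at this
  exact hm3 this



lemma goal_rot3 (hinv : ∀ x, π (π x) = x) (hm : 2 ≤ m)
    {i j l : Fin n} (hij : i < j) (hjl : j < l)
    (hi : π i = i) (hj : π j = l) (hl : π l = j)
    (hfixc : ∀ p : Fin n, π p = p → p = i ∨ l < p)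
    (hacyc : ∀ x : Fin n, x < π x → x = j ∨ (x < i ∧ j < π x))
    (hbcyc : ∀ x : Fin n, π x < x → x = l ∨ (π x < i ∧ j < x))
    (hvgap : ∀ w : Fin n, j < w → w < l → π w < i)
    (hsmall : ∀ x : Fin n, x < i → x < π x ∧ j < π x)
    (heqc : ∀ x y w : Fin n, x < y → y < w → π x < π w → π w < π y → x = i) :
    False := by
  set L := Fin.last m with hL
  have hLval : L.val = m := rfl
  have hltL : ∀ a : Fin (m+1), a ≠ L → a < L := by
    intro a ha
    rw [Fin.lt_def, hLval]
    have h1' := a.isLt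
    have h2' : a.val ≠ m := fun he => ha (Fin.ext (by rw [hLval]; omega))
    omega
  obtain ⟨z0, hz0v⟩ : ∃ a : Fin (m+1), a.val = 0 := ⟨⟨0, by omega⟩, rfl⟩
  obtain ⟨z1, hz1v⟩ : ∃ a : Fin (m+1), a.val = 1 := ⟨⟨1, by omega⟩, rfl⟩
  obtain ⟨Lm1, hLm1v⟩ : ∃ a : Fin (m+1), a.val = m - 1 := ⟨⟨m - 1, by omega⟩, rfl⟩
  have hz0L : z0 ≠ L := by
    intro he; have := congrArg Fin.val he; rw [hz0v, hLval] at this; omega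
  have hz1L : z1 ≠ L := by
    intro he; have := congrArg Fin.val he; rw [hz1v, hLval] at this; omega
  have hLm1L : Lm1 ≠ L := by
    intro he; have := congrArg Fin.val he; rw [hLm1v, hLval] at this; omega
  have hz01 : z0 < z1 := by rw [Fin.lt_def, hz0v, hz1v]; omega
  have hz0Lm1 : z0 < Lm1 := by rw [Fin.lt_def, hz0v, hLm1v]; omega
  have hgez1 : ∀ a : Fin (m+1), z0 < a → z1 ≤ a := by
    intro a ha
    rw [Fin.lt_def, hz0v] at ha
    rw [Fin.le_def, hz1v]; omega
  have hfge : ∀ a b : Fin (m+1), a ≤ b → f₀ a ≤ f₀ b := by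
    intro a b hab
    rcases eq_or_lt_of_le hab with rfl | hlt
    · exact le_refl _
    · exact le_of_lt (h1 a b hlt)
  have hfeq : ∀ a b : Fin (m+1), f₀ a = f₀ b → a = b := by
    intro a b he
    rcases lt_trichotomy a b with h | h | h
    · exact absurd (h1 a b h) (by rw [he]; exact lt_irrefl _)
    · exact h
    · exact absurd (h1 b a h) (by rw [he]; exact lt_irrefl _)
  -- abbreviation-level facts
  have hvacz0 : ∀ a : Fin (m+1), ¬ a < z0 := by
    intro a ha; rw [Fin.lt_def, hz0v] at ha; omega
  have ha0lt : ∀ a : Fin (m+1), a ≠ z0 → z0 < a := by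
    intro a ha
    have : a.val ≠ 0 := fun he => ha (Fin.ext (by rw [hz0v]; omega))
    rw [Fin.lt_def, hz0v]; omega
  have haLm1le : ∀ a : Fin (m+1), a ≠ L → a ≤ Lm1 := by
    intro a ha
    have h1' := a.isLt
    have h2' : a.val ≠ m := fun he => ha (Fin.ext (by rw [hLval]; omega))
    rw [Fin.le_def, hLm1v]; omega
  have haltLm1 : ∀ a : Fin (m+1), a ≠ L → a ≠ Lm1 → a < Lm1 := by
    intro a ha hb
    have h1' := a.isLt
    have h2' : a.val ≠ m := fun he => ha (Fin.ext (by rw [hLval]; omega))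
    have h3' : a.val ≠ m - 1 := fun he => hb (Fin.ext (by rw [hLm1v]; omega))
    rw [Fin.lt_def, hLm1v]; omega
  have hlz1 : ∀ a : Fin (m+1), a < z1 → a = z0 := by
    intro a ha
    rw [Fin.lt_def, hz1v] at ha
    exact Fin.ext (by rw [hz0v]; omega)
  have hLm1ltL : Lm1 < L := hltL Lm1 hLm1L
  have hzLlt : ∀ a, a ≠ L → f₀ a < f₀ L := fun a ha => h1 a L (hltL a ha)
  -- N1 helper
  have N1 : (∀ a, a ≠ L → f₀ a < l ∧ j < π (f₀ a)) → l ≠ f₀ L → False := by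
    intro h hne
    exact U2 h1 h2 h3 huniqR l (fun a ha => (h a ha).1)
      (fun a ha => by rw [hl]; exact (h a ha).2) hne
  rcases lt_trichotomy (π (f₀ L)) (f₀ L) with hzb | hzf | hza
  · -- drop is b-type or l
    rcases hbcyc _ hzb with hzl | ⟨hvzi, hjz⟩
    · -- N2 : z = l
      have hjvz : π (f₀ L) = j := by rw [hzl, hl]
      have ht0lt : f₀ z0 < l := by rw [← hzl]; exact hzLlt z0 hz0L
      have hv0gt : j < π (f₀ z0) := by rw [← hjvz]; exact h3 z0 hz0L
      have ht0i : f₀ z0 < i := by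
        rcases lt_trichotomy (π (f₀ z0)) (f₀ z0) with hb | hf | hA
        · rcases hbcyc _ hb with he | ⟨hlt2, _⟩
          · rw [he] at ht0lt; exact absurd ht0lt (lt_irrefl l)
          · exact absurd (lt_trans hv0gt (lt_trans hlt2 hij)) (lt_irrefl j)
        · exfalso
          rcases hfixc _ hf with he | he
          · rw [hf, he] at hv0gt; exact absurd hv0gt (asymm hij)
          · exact absurd (lt_trans he ht0lt) (lt_irrefl l)
        · rcases hacyc _ hA with he | ⟨hh, _⟩
          · exfalso
            have hs1a : f₀ z0 < f₀ z1 := h1 _ _ hz01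
            have hs1b : f₀ z1 < l := by rw [← hzl]; exact hzLlt z1 hz1L
            rw [he] at hs1a
            have hgap := hvgap _ hs1a hs1b
            have hv1 : π (f₀ z0) < π (f₀ z1) := h2 z0 z1 hz01 hz1L
            rw [he, hj] at hv1
            exact absurd (lt_trans hv1 hgap) (asymm (lt_trans hij hjl))
          · exact hh
      refine U2 h1 h2 h3 huniqR (π (f₀ z0)) ?_ ?_ ?_
      · intro a ha
        have hvagt : j < π (f₀ a) := by rw [← hjvz]; exact h3 a ha
        have hfal : f₀ a < l := by rw [← hzl]; exact hzLlt a ha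
        have hfaj : f₀ a ≤ j := by
          rcases lt_trichotomy (π (f₀ a)) (f₀ a) with hb | hf | hA
          · rcases hbcyc _ hb with he | ⟨hlt2, _⟩
            · rw [he] at hfal; exact absurd hfal (lt_irrefl l)
            · exact absurd (lt_trans hvagt (lt_trans hlt2 hij)) (lt_irrefl j)
          · rcases hfixc _ hf with he | he
            · rw [hf, he] at hvagt; exact absurd hvagt (asymm hij)
            · exact absurd (lt_trans he hfal) (lt_irrefl l)
          · rcases hacyc _ hA with he | ⟨hlt2, _⟩
            · exact le_of_eq he
            · exact le_of_lt (lt_trans hlt2 hij)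
        exact lt_of_le_of_lt hfaj hv0gt
      · intro a ha
        rw [hinv]
        have hvagt : j < π (f₀ a) := by rw [← hjvz]; exact h3 a ha
        exact lt_trans (lt_trans ht0i hij) hvagt
      · intro he
        rw [hzl] at he
        have : f₀ z0 = j := by rw [← hinv (f₀ z0), he, hl]
        rw [this] at ht0i
        exact absurd ht0i (asymm hij)
    · -- MAIN case
      have hznel : f₀ L ≠ l := by
        intro he; rw [he, hl] at hvzi
        exact absurd hvzi (asymm hij)
      rcases lt_trichotomy (π (f₀ z0)) (f₀ z0) with hbt | hft | hat
      · -- t₀ b-type or l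
        rcases hbcyc _ hbt with ht0l | ⟨hb1, hb2⟩
        · -- M4 : t₀ = l
          refine U1 h1 h2 h3 huniqR z0 j hz0L (fun a ha => absurd ha (hvacz0 a)) ?_
            (fun a ha => absurd ha (hvacz0 a)) ?_ ?_ ?_
          · intro a ha
            have := h1 z0 a ha
            rw [ht0l] at this
            exact lt_trans hjl this
          · intro a ha haL
            rw [hj]
            have hva : j < π (f₀ a) := by
              have := h2 z0 a ha haL
              rwa [ht0l, hl] at this
            have hfa : l < f₀ a := by
              have := h1 z0 a ha
              rwa [ht0l] at this
            rcases lt_trichotomy (π (f₀ a)) l with hc | hc | hc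
            · exfalso
              have := hvgap _ hva hc
              rw [hinv] at this
              exact absurd (lt_trans (lt_trans hij hjl) (lt_trans hfa this))
                (lt_irrefl i)
            · exfalso
              have : f₀ a = j := by rw [← hinv (f₀ a), hc, hl]
              rw [this] at hfa
              exact absurd hfa (asymm hjl)
            · exact hc
          · rw [hj]; exact lt_trans (lt_trans hvzi hij) hjl
          · rw [ht0l]; exact ne_of_lt hjl
        · -- M1 : t₀ b-type, use mirror
          refine MIR h1 h2 h3 huniqR hinv hm Lm1 z0 hLm1v hz0v ?_ ?_ ?_
          · -- π e < z
            have het0 : f₀ z0 < f₀ Lm1 := h1 z0 Lm1 hz0Lm1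
            rcases lt_trichotomy (π (f₀ Lm1)) (f₀ Lm1) with hc | hc | hc
            · exact lt_trans hc (h1 Lm1 L hLm1ltL)
            · rw [hc]; exact h1 Lm1 L hLm1ltL
            · exfalso
              rcases hacyc _ hc with he | ⟨he, _⟩
              · rw [he] at het0; exact absurd (lt_trans hb2 het0) (lt_irrefl j)
              · exact absurd (lt_trans hb2 (lt_trans het0 he)) (asymm hij)
          · exact lt_trans hvzi (lt_trans hij hb2)
          · exact ne_of_lt hbt
      · -- t₀ fixed
        rcases hfixc _ hft with ht0i' | hlt0
        · -- M2 : t₀ = i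
          have hs1gt : i < f₀ z1 := by
            have := h1 z0 z1 hz01; rwa [ht0i'] at this
          have hv1gt : i < π (f₀ z1) := by
            have := h2 z0 z1 hz01 hz1L; rwa [ht0i', hi] at this
          rcases lt_trichotomy (π (f₀ z1)) (f₀ z1) with hc | hc | hc
          · rcases hbcyc _ hc with hs1l | ⟨hh, _⟩
            · -- M2-l
              refine U1 h1 h2 h3 huniqR z1 j hz1L ?_ ?_ ?_ ?_ ?_ ?_
              · intro a ha; rw [hlz1 a ha, ht0i']; exact hij
              · intro a ha
                have := h1 z1 a ha; rw [hs1l] at this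
                exact lt_trans hjl this
              · intro a ha; rw [hlz1 a ha, ht0i', hi, hj]; exact lt_trans hij hjl
              · intro a ha haL
                rw [hj]
                have hva : j < π (f₀ a) := by
                  have := h2 z1 a ha haL; rwa [hs1l, hl] at this
                have hfa : l < f₀ a := by
                  have := h1 z1 a ha; rwa [hs1l] at this
                rcases lt_trichotomy (π (f₀ a)) l with hc2 | hc2 | hc2
                · exfalso
                  have := hvgap _ hva hc2
                  rw [hinv] at this
                  exact absurd (lt_trans (lt_trans hij hjl) (lt_trans hfa this))
                    (lt_irrefl i)
                · exfalso
                  have : f₀ a = j := by rw [← hinv (f₀ a), hc2, hl]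
                  rw [this] at hfa
                  exact absurd hfa (asymm hjl)
                · exact hc2
              · rw [hj]; exact lt_trans (lt_trans hvzi hij) hjl
              · rw [hs1l]; exact ne_of_lt hjl
            · exact absurd (lt_trans hv1gt hh) (lt_irrefl i)
          · rcases hfixc _ hc with he | hs1gl
            · rw [he] at hs1gt; exact absurd hs1gt (lt_irrefl i)
            · -- M2-g
              refine U1 h1 h2 h3 huniqR z1 j hz1L ?_ ?_ ?_ ?_ ?_ ?_
              · intro a ha; rw [hlz1 a ha, ht0i']; exact hij
              · intro a ha
                exact lt_trans (lt_trans hjl hs1gl) (h1 z1 a ha)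
              · intro a ha; rw [hlz1 a ha, ht0i', hi, hj]; exact lt_trans hij hjl
              · intro a ha haL
                rw [hj]
                have := h2 z1 a ha haL
                rw [hc] at this
                exact lt_trans hs1gl this
              · rw [hj]; exact lt_trans (lt_trans hvzi hij) hjl
              · exact ne_of_lt (lt_trans hjl hs1gl)
          · rcases hacyc _ hc with hs1j | ⟨hh, _⟩
            · -- M2-j
              obtain ⟨z2, hz2v⟩ : ∃ a : Fin (m+1), a.val = 2 := ⟨⟨2, by omega⟩, rfl⟩
              by_cases hz2L : z2 = L
              · -- m = 2
                have hm2v : m = 2 := by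
                  have := congrArg Fin.val hz2L
                  rw [hz2v, hLval] at this; omega
                rcases lt_trichotomy (f₀ L) l with hzlt | hzeq | hzgt
                · -- z < l : U1 z0 (π z)
                  refine U1 h1 h2 h3 huniqR z0 (π (f₀ L)) hz0L (fun a ha => absurd ha (hvacz0 a)) ?_
                    (fun a ha => absurd ha (hvacz0 a)) ?_ ?_ ?_
                  · intro a ha
                    have : j ≤ f₀ a := by
                      rcases eq_or_lt_of_le (hgez1 a ha) with he | hlt'
                      · rw [← he, hs1j]
                      · rw [← hs1j]; exact le_of_lt (h1 z1 a hlt')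
                    exact lt_of_lt_of_le (lt_trans hvzi hij) this
                  · intro a ha haL
                    rw [hinv]
                    have haz1 : a = z1 := by
                      have h1' := a.isLt
                      have h2' : a.val ≠ m := fun he => haL (Fin.ext (by rw [hLval]; omega))
                      have h3' : 0 < a.val := by
                        rw [Fin.lt_def, hz0v] at ha; exact ha
                      exact Fin.ext (by rw [hz1v]; omega)
                    rw [haz1, hs1j, hj]
                    exact hzlt
                  · rw [hinv]
                    exact lt_trans hvzi (lt_trans hij hjz)
                  · rw [ht0i']; exact ne_of_lt hvzi
                · exact absurd hzeq hznel
                · -- z > l : U1 z1 l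
                  refine U1 h1 h2 h3 huniqR z1 l hz1L ?_ ?_ ?_ ?_ ?_ ?_
                  · intro a ha; rw [hlz1 a ha, ht0i']; exact lt_trans hij hjl
                  · intro a ha
                    have haL : a = L := by
                      rw [Fin.lt_def, hz1v] at ha
                      have h1' := a.isLt
                      exact Fin.ext (by rw [hLval]; omega)
                    rw [haL]; exact hzgt
                  · intro a ha; rw [hlz1 a ha, ht0i', hi, hl]; exact hij
                  · intro a ha haL
                    exfalso
                    apply haL
                    rw [Fin.lt_def, hz1v] at ha
                    have h1' := a.isLt
                    exact Fin.ext (by rw [hLval]; omega)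
                  · rw [hl]; exact lt_trans hvzi hij
                  · rw [hs1j]; exact ne_of_gt hjl
              · -- m ≥ 3
                have hz12 : z1 < z2 := by rw [Fin.lt_def, hz1v, hz2v]; omega
                have hs2j : j < f₀ z2 := by
                  have := h1 z1 z2 hz12; rwa [hs1j] at this
                have hv2 : l < π (f₀ z2) := by
                  have := h2 z1 z2 hz12 hz2L; rwa [hs1j, hj] at this
                have hs2 : l < f₀ z2 := by
                  rcases lt_trichotomy (f₀ z2) l with hc2 | hc2 | hc2
                  · exfalso
                    have := hvgap _ hs2j hc2
                    exact absurd (lt_trans hv2 this) (asymm (lt_trans hij hjl))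
                  · exfalso; rw [hc2, hl] at hv2; exact absurd hv2 (asymm hjl)
                  · exact hc2
                have hgez2 : ∀ a : Fin (m+1), z1 < a → z2 ≤ a := by
                  intro a ha
                  rw [Fin.lt_def, hz1v] at ha
                  rw [Fin.le_def, hz2v]; omega
                refine U1 h1 h2 h3 huniqR z1 l hz1L ?_ ?_ ?_ ?_ ?_ ?_
                · intro a ha; rw [hlz1 a ha, ht0i']; exact lt_trans hij hjl
                · intro a ha
                  rcases eq_or_lt_of_le (hgez2 a ha) with he | hlt'
                  · rw [← he]; exact hs2
                  · exact lt_trans hs2 (h1 z2 a hlt')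
                · intro a ha; rw [hlz1 a ha, ht0i', hi, hl]; exact hij
                · intro a ha haL
                  rw [hl]
                  rcases eq_or_lt_of_le (hgez2 a ha) with he | hlt'
                  · rw [← he]; exact lt_trans hjl hv2
                  · exact lt_trans (lt_trans hjl hv2) (h2 z2 a hlt' haL)
                · rw [hl]; exact lt_trans hvzi hij
                · rw [hs1j]; exact ne_of_gt hjl
            · exact absurd (lt_trans hs1gt hh) (lt_irrefl i)
        · -- M5 : t₀ fixed > l
          refine U1 h1 h2 h3 huniqR z0 i hz0L (fun a ha => absurd ha (hvacz0 a)) ?_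
            (fun a ha => absurd ha (hvacz0 a)) ?_ ?_ ?_
          · intro a ha
            exact lt_trans (lt_trans (lt_trans hij hjl) hlt0) (h1 z0 a ha)
          · intro a ha haL
            rw [hi]
            have := h2 z0 a ha haL
            rw [hft] at this
            exact lt_trans (lt_trans (lt_trans hij hjl) hlt0) this
          · rw [hi]; exact hvzi
          · exact ne_of_lt (lt_trans (lt_trans hij hjl) hlt0)
      · -- t₀ a-type or j
        rcases hacyc _ hat with ht0j | ⟨ht0i, hjv0⟩
        · -- M3 : t₀ = j
          have hv1 : l < π (f₀ z1) := by
            have := h2 z0 z1 hz01 hz1L; rwa [ht0j, hj] at this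
          have hs1j : j < f₀ z1 := by
            have := h1 z0 z1 hz01; rwa [ht0j] at this
          have hs1 : l < f₀ z1 := by
            rcases lt_trichotomy (f₀ z1) l with hc | hc | hc
            · exfalso
              have := hvgap _ hs1j hc
              exact absurd (lt_trans hv1 this) (asymm (lt_trans hij hjl))
            · exfalso; rw [hc, hl] at hv1; exact absurd hv1 (asymm hjl)
            · exact hc
          refine U1 h1 h2 h3 huniqR z0 l hz0L (fun a ha => absurd ha (hvacz0 a)) ?_
            (fun a ha => absurd ha (hvacz0 a)) ?_ ?_ ?_
          · intro a ha
            rcases eq_or_lt_of_le (hgez1 a ha) with he | hlt'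
            · rw [← he]; exact hs1
            · exact lt_trans hs1 (h1 z1 a hlt')
          · intro a ha haL
            rw [hl]
            have := h2 z0 a ha haL
            rw [ht0j, hj] at this
            exact lt_trans hjl this
          · rw [hl]; exact lt_trans hvzi hij
          · rw [ht0j]; exact ne_of_gt hjl
        · -- M6 : t₀ a-type
          have hvve : π (f₀ z0) < π (f₀ Lm1) := h2 z0 Lm1 hz0Lm1 hLm1L
          rcases lt_trichotomy (π (f₀ Lm1)) (f₀ Lm1) with hc | hc | hc
          · -- end b-type: impossible
            exfalso
            rcases hbcyc _ hc with he | ⟨hh, _⟩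
            · rw [he, hl] at hvve
              exact absurd (lt_trans hjv0 hvve) (lt_irrefl j)
            · exact absurd (lt_trans hjv0 (lt_trans hvve hh)) (asymm hij)
          · -- end fixed
            rcases hfixc _ hc with hei | helg
            · exfalso
              rw [hei, hi] at hvve
              exact absurd (lt_trans hjv0 hvve) (asymm hij)
            · -- end g-type
              rcases lt_trichotomy (π (f₀ L)) (f₀ z0) with hlt | heq | hgt
              · refine MIR h1 h2 h3 huniqR hinv hm Lm1 z0 hLm1v hz0v ?_ hlt
                  (ne_of_gt hat)
                rw [hc]; exact h1 Lm1 L hLm1ltL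
              · exfalso
                have hzq : f₀ L = π (f₀ z0) := by rw [← heq, hinv]
                have h5 : π (f₀ z0) < f₀ Lm1 := by rw [← hc]; exact hvve
                have h6 : f₀ Lm1 < f₀ L := h1 Lm1 L hLm1ltL
                rw [hzq] at h6
                exact absurd (lt_trans h5 h6) (lt_irrefl _)
              · exfalso
                have hx_y : π (f₀ z0) < f₀ Lm1 := by rw [← hc]; exact hvve
                have hy_w : f₀ Lm1 < f₀ L := h1 Lm1 L hLm1ltL
                have hπx : π (π (f₀ z0)) < π (f₀ L) := by rw [hinv]; exact hgt
                have hπw : π (f₀ L) < π (f₀ Lm1) := by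
                  rw [hc]
                  exact lt_trans hvzi (lt_trans hij (lt_trans hjl helg))
                have := heqc _ _ _ hx_y hy_w hπx hπw
                rw [this] at hjv0
                exact absurd hjv0 (asymm hij)
          · -- end a-type or j
            rcases hacyc _ hc with hej | ⟨heiA, _⟩
            · -- M6 end = j
              have hallA : ∀ a, a < Lm1 → f₀ a < i ∧ j < π (f₀ a) := by
                intro a ha
                have hfaj : f₀ a < j := by rw [← hej]; exact h1 a Lm1 ha
                have haL : a ≠ L := by
                  intro he'; rw [he'] at ha; exact absurd ha (asymm hLm1ltL)
                rcases lt_trichotomy (π (f₀ a)) (f₀ a) with hb | hf | hA2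
                · exfalso
                  rcases hbcyc _ hb with he' | ⟨_, hh⟩
                  · rw [he'] at hfaj; exact absurd hfaj (asymm hjl)
                  · exact absurd (lt_trans hh hfaj) (lt_irrefl j)
                · exfalso
                  rcases hfixc _ hf with he' | hh
                  · rcases eq_or_ne a z0 with rfl | ha0
                    · rw [he'] at ht0i; exact absurd ht0i (lt_irrefl i)
                    · have := h2 z0 a (ha0lt a ha0) haL
                      rw [hf, he'] at this
                      exact absurd (lt_trans hjv0 this) (asymm hij)
                  · exact absurd (lt_trans hh hfaj) (asymm hjl)
                · rcases hacyc _ hA2 with he' | hgood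
                  · exfalso; rw [he'] at hfaj; exact absurd hfaj (lt_irrefl j)
                  · exact hgood
              have hvgtj : ∀ a, a ≠ L → j < π (f₀ a) := by
                intro a ha
                rcases eq_or_ne a Lm1 with rfl | hne'
                · rw [hej, hj]; exact hjl
                · exact (hallA a (haltLm1 a ha hne')).2
              have hfalej : ∀ a, a ≠ L → f₀ a ≤ j := by
                intro a ha
                rcases eq_or_ne a Lm1 with rfl | hne'
                · exact le_of_eq hej
                · exact le_of_lt (lt_trans (hallA a (haltLm1 a ha hne')).1 hij)
              rcases lt_trichotomy (f₀ L) l with hzlt | hzeq | hzgt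
              · -- z < l
                obtain ⟨Lm2, hLm2v⟩ : ∃ a : Fin (m+1), a.val = m - 2 := ⟨⟨m - 2, by omega⟩, rfl⟩
                have hLm2lt : Lm2 < Lm1 := by
                  rw [Fin.lt_def, hLm2v, hLm1v]; omega
                have hW := hallA Lm2 hLm2lt
                by_cases hWz : π (f₀ Lm2) = f₀ L
                · by_cases hW2z : π (f₀ z0) = f₀ L
                  · -- Lm2 = z0, m = 2
                    have hfeq2 : f₀ Lm2 = f₀ z0 := π.injective (hWz.trans hW2z.symm)
                    have hLm2z0 : Lm2 = z0 := hfeq _ _ hfeq2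
                    have hm2v : m = 2 := by
                      have := congrArg Fin.val hLm2z0
                      rw [hLm2v, hz0v] at this; omega
                    have hz1Lm1 : z1 = Lm1 := by
                      exact Fin.ext (by rw [hz1v, hLm1v]; omega)
                    refine U1 h1 h2 h3 huniqR z0 i hz0L (fun a ha => absurd ha (hvacz0 a)) ?_
                      (fun a ha => absurd ha (hvacz0 a)) ?_ ?_ ?_
                    · intro a ha
                      have : f₀ z1 ≤ f₀ a := hfge z1 a (hgez1 a ha)
                      rw [hz1Lm1, hej] at this
                      exact lt_of_lt_of_le hij this
                    · intro a ha haL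
                      rw [hi]
                      have haz1 : a = z1 := by
                        have h1' := a.isLt
                        have h2' : a.val ≠ m := fun he => haL (Fin.ext (by rw [hLval]; omega))
                        have h3' : 0 < a.val := by
                          rw [Fin.lt_def, hz0v] at ha; omega
                        exact Fin.ext (by rw [hz1v]; omega)
                      rw [haz1, hz1Lm1, hej, hj]
                      exact lt_trans hij hjl
                    · rw [hi]
                      have : π (f₀ L) = f₀ z0 := by rw [← hW2z, hinv]
                      rw [this]; exact ht0i
                    · exact ne_of_gt ht0i
                  · -- U2 with π (f₀ z0)
                    refine U2 h1 h2 h3 huniqR (π (f₀ z0)) ?_ ?_ hW2z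
                    · intro a ha
                      exact lt_of_le_of_lt (hfalej a ha) hjv0
                    · intro a ha
                      rw [hinv]
                      exact lt_trans (lt_trans ht0i hij) (hvgtj a ha)
                · -- U2 with π (f₀ Lm2)
                  refine U2 h1 h2 h3 huniqR (π (f₀ Lm2)) ?_ ?_ hWz
                  · intro a ha
                    exact lt_of_le_of_lt (hfalej a ha) hW.2
                  · intro a ha
                    rw [hinv]
                    exact lt_trans (lt_trans hW.1 hij) (hvgtj a ha)
              · exact absurd hzeq hznel
              · -- z > l
                rcases lt_trichotomy (π (f₀ L)) (f₀ z0) with hlt | heq | hgt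
                · refine MIR h1 h2 h3 huniqR hinv hm Lm1 z0 hLm1v hz0v ?_ hlt
                    (ne_of_gt hat)
                  rw [hej, hj]; exact hzgt
                · exfalso
                  have hzq : f₀ L = π (f₀ z0) := by rw [← heq, hinv]
                  have h5 : π (f₀ z0) < l := by
                    have := hvve; rwa [hej, hj] at this
                  rw [← hzq] at h5
                  exact absurd (lt_trans h5 hzgt) (lt_irrefl _)
                · exfalso
                  have hx_y : π (f₀ z0) < l := by
                    have := hvve; rwa [hej, hj] at this
                  have hπx : π (π (f₀ z0)) < π (f₀ L) := by rw [hinv]; exact hgt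
                  have hπw : π (f₀ L) < π l := by
                    rw [hl]; exact lt_trans hvzi hij
                  have := heqc _ _ _ hx_y hzgt hπx hπw
                  rw [this] at hjv0
                  exact absurd hjv0 (asymm hij)
            · -- M6 pure A : U2 l
              refine U2 h1 h2 h3 huniqR l ?_ ?_ (fun he => hznel he.symm)
              · intro a ha
                have : f₀ a ≤ f₀ Lm1 := hfge a Lm1 (haLm1le a ha)
                exact lt_of_le_of_lt this (lt_trans heiA (lt_trans hij hjl))
              · intro a ha
                rw [hl]
                have hfa : f₀ a < i :=
                  lt_of_le_of_lt (hfge a Lm1 (haLm1le a ha)) heiA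
                exact (hsmall _ hfa).2
  · -- z fixed
    rcases hfixc _ hzf with hzi | hzgl
    · refine N1 ?_ (by rw [hzi]; exact ne_of_gt (lt_trans hij hjl))
      intro a ha
      have hfa : f₀ a < i := by rw [← hzi]; exact hzLlt a ha
      exact ⟨lt_trans hfa (lt_trans hij hjl), (hsmall _ hfa).2⟩
    · refine N1 ?_ (ne_of_lt hzgl)
      intro a ha
      have hva : f₀ L < π (f₀ a) := by
        have := h3 a ha; rwa [hzf] at this
      constructor
      · by_contra hge
        push_neg at hge
        rcases eq_or_lt_of_le hge with heq | hlt
        · rw [← heq, hl] at hva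
          exact absurd (lt_trans (lt_trans hjl hzgl) hva) (lt_irrefl j)
        · have hfaz : f₀ a < f₀ L := hzLlt a ha
          rcases lt_trichotomy (π (f₀ a)) (f₀ a) with hb | hf | hA
          · exact absurd (lt_trans hva (lt_trans hb hfaz)) (lt_irrefl _)
          · rw [hf] at hva; exact absurd hva (lt_asymm hfaz)
          · rcases hacyc _ hA with he | ⟨hlt2, _⟩
            · rw [he] at hlt; exact absurd hlt (asymm hjl)
            · exact absurd (lt_trans hlt hlt2) (asymm (lt_trans hij hjl))
      · exact lt_trans (lt_trans hjl hzgl) hva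
  · -- z a-type or j
    rcases hacyc _ hza with hzj | ⟨hzi', hjpz⟩
    · refine N1 ?_ (by rw [hzj]; exact ne_of_gt hjl)
      intro a ha
      have hva : l < π (f₀ a) := by
        have := h3 a ha; rwa [hzj, hj] at this
      have hfa : f₀ a < j := by rw [← hzj]; exact hzLlt a ha
      exact ⟨lt_trans hfa hjl, lt_trans hjl hva⟩
    · refine N1 ?_ (ne_of_gt (lt_trans hzi' (lt_trans hij hjl)))
      intro a ha
      have hfa : f₀ a < i := lt_trans (hzLlt a ha) hzi'
      exact ⟨lt_trans hfa (lt_trans hij hjl), (hsmall _ hfa).2⟩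



end rot

/-- For k ≥ 2, no even involution contains 132 exactly once and the identity
pattern 12⋯k exactly once, and no even involution contains 132 exactly once
and the pattern 23⋯k1 (given by finRotate k) exactly once. -/
theorem no_even_involution_132_once_and_monotone_once (k n : ℕ) (hk : 2 ≤ k) :
    (¬ ∃ π : Equiv.Perm (Fin n), (∀ i, π (π i) = i) ∧ Even (inversions π) ∧
      occ p132 π = 1 ∧ occ (1 : Equiv.Perm (Fin k)) π = 1) ∧
    (¬ ∃ π : Equiv.Perm (Fin n), (∀ i, π (π i) = i) ∧ Even (inversions π) ∧
      occ p132 π = 1 ∧ occ (finRotate k) π = 1) := by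
  constructor
  · rintro ⟨π, hinv, -, h132, hid⟩
    obtain ⟨f3, hf3, huniq3⟩ := (occ_eq_one_iff _ _).mp h132
    obtain ⟨i, j, l, hij, hjl, hi, hj, hl, huniq⟩ := struct132 hinv hf3 huniq3
    obtain ⟨fI, hfI, huniqI⟩ := (occ_eq_one_iff _ _).mp hid
    exact goal_id hinv hij hjl hi hj hl
      (fun p hp => fixed_classify hinv hij hjl hi hj hl huniq hp) hk hfI huniqI
  · rintro ⟨π, hinv, heven, h132, hrot⟩
    obtain ⟨f3, hf3, huniq3⟩ := (occ_eq_one_iff _ _).mp h132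
    obtain ⟨i, j, l, hij, hjl, hi, hj, hl, huniq⟩ := struct132 hinv hf3 huniq3
    rcases Nat.lt_or_ge k 3 with hk3 | hk3
    · -- k = 2
      have hk2 : k = 2 := by omega
      subst hk2
      obtain ⟨fR, hfR, huniqR⟩ := (occ_eq_one_iff _ _).mp hrot
      exact goal_rot2 heven hfR huniqR
    · -- k ≥ 3
      obtain ⟨m, rfl⟩ : ∃ m, k = m + 1 := ⟨k - 1, by omega⟩
      have hm : 2 ≤ m := by omega
      obtain ⟨fR, hfR, huniqR⟩ := (occ_eq_one_iff _ _).mp hrot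
      have h1 : ∀ a b : Fin (m+1), a < b → fR a < fR b := hfR.1
      have hnl : ∀ a b : Fin (m+1), a < b → a ≠ Fin.last m := by
        intro a b hab he
        rw [he, Fin.lt_def] at hab
        have := b.isLt
        simp [Fin.last] at hab
        omega
      have h2 : ∀ a b : Fin (m+1), a < b → b ≠ Fin.last m → π (fR a) < π (fR b) := by
        intro a b hab hb
        exact (hfR.2 a b).mp ((rot_lt_iff (hnl a b hab) hb).mpr hab)
      have h3 : ∀ a : Fin (m+1), a ≠ Fin.last m → π (fR (Fin.last m)) < π (fR a) := by
        intro a ha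
        exact (hfR.2 (Fin.last m) a).mp (rot_last_lt ha)
      exact goal_rot3 h1 h2 h3 huniqR hinv hm hij hjl hi hj hl
        (fun p hp => fixed_classify hinv hij hjl hi hj hl huniq hp)
        (fun x hx => acyc_classify hinv hij hjl hi hj hl huniq hx)
        (fun x hx => bcyc_classify hinv hij hjl hi hj hl huniq hx)
        (fun w hw1 hw2 => val_gap hinv hij hjl hi hj hl huniq hw1 hw2)
        (fun x hx => small_classify hinv hij hjl hi hj hl huniq hx)
        (fun x y w e1 e2 e3 e4 => (eq132 hinv hij hjl hi hj hl huniq e1 e2 e3 e4).1)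
end

section
/- For every l ≥ 0, the numbers of even involutions avoiding both patterns 132 and 123 of lengths 4l+1, 4l+2, 4l+3, 4l+4 are, respectively, 2^{2l}, 2^{2l}, 0, 2^{2l+1}; and the numbers of odd involutions avoiding both 132 and 123 of these lengths are, respectively, 0, 2^{2l}, 2^{2l+1}, 2^{2l+1}. -/
open Finset

/-- Number of even involutions of length n avoiding both 132 and 123. -/
def cntEven (n : ℕ) : ℕ :=
  (Finset.univ.filter (fun π : Equiv.Perm (Fin n) =>
    (∀ i, π (π i) = i) ∧ occ p132 π = 0 ∧ occ (1 : Equiv.Perm (Fin 3)) π = 0 ∧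
      Even (inversions π))).card

/-- Number of odd involutions of length n avoiding both 132 and 123. -/
def cntOdd (n : ℕ) : ℕ :=
  (Finset.univ.filter (fun π : Equiv.Perm (Fin n) =>
    (∀ i, π (π i) = i) ∧ occ p132 π = 0 ∧ occ (1 : Equiv.Perm (Fin 3)) π = 0 ∧
      Odd (inversions π))).card

open Finset Equiv Equiv.Perm


def Av {n : ℕ} (π : Equiv.Perm (Fin n)) : Prop :=
  ∀ i j k : Fin n, i < j → j < k → π j < π i ∨ π k < π i

lemma sign_eq_signAux_s13 {n : ℕ} (σ : Perm (Fin n)) : sign σ = signAux σ := by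
  refine Equiv.Perm.swap_induction_on σ (by simp [signAux_one]) ?_
  intro f x y hxy ih
  rw [Perm.sign_mul, sign_swap hxy, signAux_mul, signAux_swap hxy, ih]

lemma signAux_eq_pow {n : ℕ} (σ : Perm (Fin n)) : signAux σ = (-1 : ℤˣ) ^ inversions σ := by
  unfold signAux
  rw [Finset.prod_ite, Finset.prod_const, Finset.prod_const_one, mul_one]
  congr 1
  refine Finset.card_bij' (fun x _ => (x.2, x.1)) (fun p _ => ⟨p.2, p.1⟩) ?_ ?_
    (fun x _ => rfl) (fun p _ => rfl)
  · intro x hx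
    simp only [Finset.mem_filter, mem_finPairsLT] at hx
    simp only [Finset.mem_filter, Finset.mem_univ, true_and, inversions]
    refine ⟨hx.1, lt_of_le_of_ne hx.2 ?_⟩
    intro h
    exact absurd (σ.injective h) (ne_of_gt hx.1)
  · intro p hp
    simp only [inversions, Finset.mem_filter, Finset.mem_univ, true_and] at hp
    simp only [Finset.mem_filter, mem_finPairsLT]
    exact ⟨hp.1, le_of_lt hp.2⟩

lemma even_inversions_iff {n : ℕ} (σ : Perm (Fin n)) :
    Even (inversions σ) ↔ sign σ = 1 := by
  rw [sign_eq_signAux_s13, signAux_eq_pow]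
  constructor
  · intro h; exact h.neg_one_pow
  · intro h
    rcases Nat.even_or_odd (inversions σ) with he | ho
    · exact he
    · rw [ho.neg_one_pow] at h; exact absurd h (by decide)

lemma odd_inversions_iff {n : ℕ} (σ : Perm (Fin n)) :
    Odd (inversions σ) ↔ sign σ = -1 := by
  rw [sign_eq_signAux_s13, signAux_eq_pow]
  constructor
  · intro h; exact h.neg_one_pow
  · intro h
    rcases Nat.even_or_odd (inversions σ) with he | ho
    · rw [he.neg_one_pow] at h; exact absurd h (by decide)
    · exact ho

lemma mono3 {α : Type*} [LinearOrder α] (g : Fin 3 → α)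
    (h01 : g 0 < g 1) (h12 : g 1 < g 2) :
    ∀ a b : Fin 3, a < b → g a < g b := by
  intro a b hab
  fin_cases a <;> fin_cases b <;>
    first
      | exact absurd hab (by decide)
      | exact h01
      | exact h12
      | exact h01.trans h12

lemma iso123 {α : Type*} [LinearOrder α] (g : Fin 3 → α)
    (h01 : g 0 < g 1) (h12 : g 1 < g 2) (a b : Fin 3) :
    (1 : Equiv.Perm (Fin 3)) a < (1 : Equiv.Perm (Fin 3)) b ↔ g a < g b := by
  fin_cases a <;> fin_cases b
  · exact iff_of_false (by decide) (lt_irrefl _)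
  · exact iff_of_true (by decide) h01
  · exact iff_of_true (by decide) (h01.trans h12)
  · exact iff_of_false (by decide) (asymm h01)
  · exact iff_of_false (by decide) (lt_irrefl _)
  · exact iff_of_true (by decide) h12
  · exact iff_of_false (by decide) (asymm (h01.trans h12))
  · exact iff_of_false (by decide) (asymm h12)
  · exact iff_of_false (by decide) (lt_irrefl _)

lemma iso132 {α : Type*} [LinearOrder α] (g : Fin 3 → α)
    (h02 : g 0 < g 2) (h21 : g 2 < g 1) (a b : Fin 3) :
    p132 a < p132 b ↔ g a < g b := by
  fin_cases a <;> fin_cases b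
  · exact iff_of_false (by decide) (lt_irrefl _)
  · exact iff_of_true (by decide) (h02.trans h21)
  · exact iff_of_true (by decide) h02
  · exact iff_of_false (by decide) (asymm (h02.trans h21))
  · exact iff_of_false (by decide) (lt_irrefl _)
  · exact iff_of_false (by decide) (asymm h21)
  · exact iff_of_false (by decide) (asymm h02)
  · exact iff_of_true (by decide) h21
  · exact iff_of_false (by decide) (lt_irrefl _)

lemma occ_eq_zero_iff {k n : ℕ} (τ : Equiv.Perm (Fin k)) (π : Equiv.Perm (Fin n)) :
    occ τ π = 0 ↔ ∀ f : Fin k → Fin n,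
      ¬((∀ a b : Fin k, a < b → f a < f b) ∧
        (∀ a b : Fin k, τ a < τ b ↔ π (f a) < π (f b))) := by
  unfold occ
  rw [Finset.card_eq_zero, Finset.filter_eq_empty_iff]
  simp

lemma avoid_iff {n : ℕ} (π : Equiv.Perm (Fin n)) :
    (occ p132 π = 0 ∧ occ (1 : Equiv.Perm (Fin 3)) π = 0) ↔ Av π := by
  rw [occ_eq_zero_iff, occ_eq_zero_iff]
  constructor
  · rintro ⟨h132, h123⟩ i j k hij hjk
    by_contra hc
    push_neg at hc
    obtain ⟨h1, h2⟩ := hc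
    have hinj : π i ≠ π j := fun h => absurd (π.injective h) (ne_of_lt hij)
    have hinj2 : π i ≠ π k := fun h => absurd (π.injective h) (ne_of_lt (hij.trans hjk))
    have hij' : π i < π j := lt_of_le_of_ne h1 hinj
    have hik' : π i < π k := lt_of_le_of_ne h2 hinj2
    have f : Fin 3 → Fin n := ![i, j, k]
    have hmono : ∀ a b : Fin 3, a < b → (![i, j, k] : Fin 3 → Fin n) a < ![i, j, k] b :=
      mono3 _ hij hjk
    rcases lt_or_gt_of_ne (fun h : π j = π k => absurd (π.injective h) (ne_of_lt hjk)) with hjk' | hkj'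
    · exact h123 ![i, j, k] ⟨hmono, iso123 (fun a => π (![i, j, k] a)) hij' hjk'⟩
    · exact h132 ![i, j, k] ⟨hmono, iso132 (fun a => π (![i, j, k] a)) hik' hkj'⟩
  · intro hav
    constructor
    · intro f ⟨hmono, hiso⟩
      have h01 : f 0 < f 1 := hmono 0 1 (by decide)
      have h12 : f 1 < f 2 := hmono 1 2 (by decide)
      have hv1 : π (f 0) < π (f 1) := (hiso 0 1).mp (by decide)
      have hv2 : π (f 0) < π (f 2) := (hiso 0 2).mp (by decide)
      rcases hav (f 0) (f 1) (f 2) h01 h12 with h | h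
      · exact absurd hv1 (asymm h)
      · exact absurd hv2 (asymm h)
    · intro f ⟨hmono, hiso⟩
      have h01 : f 0 < f 1 := hmono 0 1 (by decide)
      have h12 : f 1 < f 2 := hmono 1 2 (by decide)
      have hv1 : π (f 0) < π (f 1) := (hiso 0 1).mp (by decide)
      have hv2 : π (f 0) < π (f 2) := (hiso 0 2).mp (by decide)
      rcases hav (f 0) (f 1) (f 2) h01 h12 with h | h
      · exact absurd hv1 (asymm h)
      · exact absurd hv2 (asymm h)

section Glue
variable {M : ℕ}

def sumFun (g : Fin M → Fin (M + 2)) (a b : Fin (M + 2)) : Fin M ⊕ Fin 2 → Fin (M + 2) :=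
  Sum.elim g (fun t => if t = 0 then a else b)

structure GlueData (g : Fin M → Fin (M + 2)) (a b : Fin (M + 2)) : Prop where
  hmono : StrictMono g
  ha : ∀ i, g i ≠ a
  hb : ∀ i, g i ≠ b
  hab : a ≠ b
  hsurj : ∀ x, x = a ∨ x = b ∨ ∃ i, g i = x
  habot : ∀ x, a ≤ x
  htop : ∀ x y : Fin (M + 2), b < x → b < y → x = y
  hone : ∀ z w : Fin M, b < g z → b < g w → z = w

namespace GlueData

variable {g : Fin M → Fin (M + 2)} {a b : Fin (M + 2)}

lemma hginj (D : GlueData g a b) : Function.Injective g := D.hmono.injective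

lemma bij (D : GlueData g a b) : Function.Bijective (sumFun g a b) := by
  constructor
  · intro x y h
    match x, y with
    | Sum.inl i, Sum.inl j => exact congrArg Sum.inl (D.hginj h)
    | Sum.inl i, Sum.inr t =>
        simp only [sumFun, Sum.elim_inl, Sum.elim_inr] at h
        split at h
        · exact absurd h (D.ha i)
        · exact absurd h (D.hb i)
    | Sum.inr t, Sum.inl j =>
        simp only [sumFun, Sum.elim_inl, Sum.elim_inr] at h
        split at h
        · exact absurd h.symm (D.ha j)
        · exact absurd h.symm (D.hb j)
    | Sum.inr t, Sum.inr s =>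
        simp only [sumFun, Sum.elim_inr] at h
        congr 1
        split at h <;> split at h
        · rename_i h1 h2; rw [h1, h2]
        · exact absurd h D.hab
        · exact absurd h.symm D.hab
        · have : t = 1 := by omega
          have : s = 1 := by omega
          rename_i h1 h2
          rw [show t = 1 by omega, show s = 1 by omega]
  · intro x
    rcases D.hsurj x with rfl | rfl | ⟨i, rfl⟩
    · exact ⟨Sum.inr 0, by simp [sumFun]⟩
    · exact ⟨Sum.inr 1, by simp [sumFun]⟩
    · exact ⟨Sum.inl i, rfl⟩

noncomputable def E (D : GlueData g a b) : (Fin M ⊕ Fin 2) ≃ Fin (M + 2) :=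
  Equiv.ofBijective _ D.bij

lemma E_inl (D : GlueData g a b) (i : Fin M) : D.E (Sum.inl i) = g i := rfl

lemma E_inr0 (D : GlueData g a b) : D.E (Sum.inr 0) = a := by
  show sumFun g a b (Sum.inr 0) = a
  simp [sumFun]

lemma E_inr1 (D : GlueData g a b) : D.E (Sum.inr 1) = b := by
  show sumFun g a b (Sum.inr 1) = b
  simp [sumFun]

noncomputable def F (D : GlueData g a b) (π' : Equiv.Perm (Fin M)) :
    Equiv.Perm (Fin (M + 2)) :=
  (Equiv.swap a b) * (D.E.permCongr (Equiv.sumCongr π' (1 : Equiv.Perm (Fin 2))))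

lemma F_apply_g (D : GlueData g a b) (π' : Equiv.Perm (Fin M)) (i : Fin M) :
    D.F π' (g i) = g (π' i) := by
  have h1 : D.E.symm (g i) = Sum.inl i := by
    rw [← D.E_inl i, Equiv.symm_apply_apply]
  simp only [F, Equiv.Perm.mul_apply, Equiv.permCongr_apply, h1,
    Equiv.sumCongr_apply, Sum.map_inl, D.E_inl]
  exact Equiv.swap_apply_of_ne_of_ne (D.ha _) (D.hb _)

lemma F_apply_a (D : GlueData g a b) (π' : Equiv.Perm (Fin M)) : D.F π' a = b := by
  have h1 : D.E.symm a = Sum.inr 0 := by rw [Equiv.symm_apply_eq, D.E_inr0]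
  simp only [F, Equiv.Perm.mul_apply, Equiv.permCongr_apply, h1,
    Equiv.sumCongr_apply, Sum.map_inr]
  rw [show ((1 : Equiv.Perm (Fin 2)) 0) = 0 from rfl, D.E_inr0, Equiv.swap_apply_left]

lemma F_apply_b (D : GlueData g a b) (π' : Equiv.Perm (Fin M)) : D.F π' b = a := by
  have h1 : D.E.symm b = Sum.inr 1 := by rw [Equiv.symm_apply_eq, D.E_inr1]
  simp only [F, Equiv.Perm.mul_apply, Equiv.permCongr_apply, h1,
    Equiv.sumCongr_apply, Sum.map_inr]
  rw [show ((1 : Equiv.Perm (Fin 2)) 1) = 1 from rfl, D.E_inr1, Equiv.swap_apply_right]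

lemma F_invol (D : GlueData g a b) (π' : Equiv.Perm (Fin M)) (h : ∀ i, π' (π' i) = i) :
    ∀ x, D.F π' (D.F π' x) = x := by
  intro x
  rcases D.hsurj x with rfl | rfl | ⟨i, rfl⟩
  · rw [D.F_apply_a, D.F_apply_b]
  · rw [D.F_apply_b, D.F_apply_a]
  · rw [D.F_apply_g, D.F_apply_g, h]

lemma F_sign (D : GlueData g a b) (π' : Equiv.Perm (Fin M)) :
    Equiv.Perm.sign (D.F π') = -Equiv.Perm.sign π' := by
  rw [F, Equiv.Perm.sign_mul, Equiv.Perm.sign_swap D.hab, Equiv.Perm.sign_permCongr,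
    Equiv.Perm.sign_sumCongr, Equiv.Perm.sign_one, mul_one, neg_one_mul]

lemma F_injective (D : GlueData g a b) : Function.Injective D.F := by
  intro π₁ π₂ h
  ext i
  have := congrArg (fun σ : Equiv.Perm (Fin (M+2)) => σ (g i)) h
  simp only [D.F_apply_g] at this
  exact congrArg Fin.val (D.hginj this)

lemma F_av (D : GlueData g a b) (π' : Equiv.Perm (Fin M)) (hav : Av π') : Av (D.F π') := by
  have hab' : a < b := lt_of_le_of_ne (D.habot b) D.hab
  intro i j k hij hjk
  rcases D.hsurj i with rfl | rfl | ⟨x, rfl⟩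
  · rw [D.F_apply_a]
    rcases D.hsurj j with rfl | rfl | ⟨y, rfl⟩
    · exact absurd hij (lt_irrefl _)
    · left; rw [D.F_apply_b]; exact hab'
    · rcases D.hsurj k with rfl | rfl | ⟨z, rfl⟩
      · exact absurd (lt_trans hij hjk) (not_lt_of_ge (D.habot _))
      · right; rw [D.F_apply_b]; exact hab'
      · rw [D.F_apply_g, D.F_apply_g]
        by_contra hcon
        push_neg at hcon
        obtain ⟨h1, h2⟩ := hcon
        have hb1 : b < g (π' y) := lt_of_le_of_ne h1 (Ne.symm (D.hb _))
        have hb2 : b < g (π' z) := lt_of_le_of_ne h2 (Ne.symm (D.hb _))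
        have heq := π'.injective (D.hone _ _ hb1 hb2)
        rw [heq] at hjk
        exact absurd hjk (lt_irrefl _)
  · exact absurd (D.htop _ _ hij (lt_trans hij hjk)) (ne_of_lt hjk)
  · rw [D.F_apply_g]
    have hgi_pos : a < g (π' x) := lt_of_le_of_ne (D.habot _) (Ne.symm (D.ha _))
    rcases D.hsurj j with rfl | rfl | ⟨y, rfl⟩
    · exact absurd hij (not_lt_of_ge (D.habot _))
    · left; rw [D.F_apply_b]; exact hgi_pos
    · rcases D.hsurj k with rfl | rfl | ⟨z, rfl⟩
      · exact absurd (lt_trans hij hjk) (not_lt_of_ge (D.habot _))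
      · right; rw [D.F_apply_b]; exact hgi_pos
      · rw [D.F_apply_g, D.F_apply_g]
        have hxy : x < y := D.hmono.lt_iff_lt.mp hij
        have hyz : y < z := D.hmono.lt_iff_lt.mp hjk
        rcases hav x y z hxy hyz with h | h
        · left; exact D.hmono h
        · right; exact D.hmono h

variable (π : Equiv.Perm (Fin (M + 2)))

lemma strip_exists (D : GlueData g a b) (hinv : ∀ x, π (π x) = x) (hpa : π a = b) :
    ∀ i : Fin M, ∃ j : Fin M, π (g i) = g j := by
  intro i
  have hpb : π b = a := by rw [← hpa, hinv]
  rcases D.hsurj (π (g i)) with h | h | ⟨j, hj⟩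
  · exfalso
    have hgi : g i = π a := by rw [← h, hinv]
    rw [hpa] at hgi
    exact D.hb i hgi
  · exfalso
    have hgi : g i = π b := by rw [← h, hinv]
    rw [hpb] at hgi
    exact D.ha i hgi
  · exact ⟨j, hj.symm⟩

noncomputable def strip (D : GlueData g a b) (hinv : ∀ x, π (π x) = x) (hpa : π a = b) :
    Equiv.Perm (Fin M) := by
  refine ⟨fun i => (D.strip_exists π hinv hpa i).choose,
          fun i => (D.strip_exists π hinv hpa i).choose, ?_, ?_⟩ <;>
  · intro i
    have h1 := (D.strip_exists π hinv hpa i).choose_spec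
    have h2 := (D.strip_exists π hinv hpa ((D.strip_exists π hinv hpa i).choose)).choose_spec
    apply D.hginj
    rw [← h2, ← h1, hinv]

lemma strip_spec (D : GlueData g a b) (hinv : ∀ x, π (π x) = x) (hpa : π a = b) (i : Fin M) :
    π (g i) = g (D.strip π hinv hpa i) :=
  (D.strip_exists π hinv hpa i).choose_spec

lemma strip_invol (D : GlueData g a b) (hinv : ∀ x, π (π x) = x) (hpa : π a = b) :
    ∀ i, D.strip π hinv hpa (D.strip π hinv hpa i) = i := by
  intro i
  apply D.hginj
  rw [← D.strip_spec π hinv hpa, ← D.strip_spec π hinv hpa, hinv]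

lemma F_strip (D : GlueData g a b) (hinv : ∀ x, π (π x) = x) (hpa : π a = b) :
    D.F (D.strip π hinv hpa) = π := by
  apply Equiv.ext
  intro x
  rcases D.hsurj x with rfl | rfl | ⟨i, rfl⟩
  · rw [D.F_apply_a, hpa]
  · rw [D.F_apply_b, ← hpa, hinv]
  · rw [D.F_apply_g, ← D.strip_spec π hinv hpa]

lemma strip_av (D : GlueData g a b) (hinv : ∀ x, π (π x) = x) (hpa : π a = b) (hav : Av π) :
    Av (D.strip π hinv hpa) := by
  intro i j k hij hjk
  have h := hav (g i) (g j) (g k) (D.hmono hij) (D.hmono hjk)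
  rw [D.strip_spec π hinv hpa, D.strip_spec π hinv hpa, D.strip_spec π hinv hpa] at h
  rcases h with h | h
  · left; exact D.hmono.lt_iff_lt.mp h
  · right; exact D.hmono.lt_iff_lt.mp h

end GlueData
end Glue

variable {M : ℕ}
section Inst
variable {m : ℕ}

def g1 (m : ℕ) : Fin (m + 1) → Fin (m + 3) := fun i => ⟨i.val + 1, by omega⟩
def b1 (m : ℕ) : Fin (m + 3) := ⟨m + 2, by omega⟩
def g2 (m : ℕ) : Fin (m + 1) → Fin (m + 3) :=
  fun i => if i.val = m then ⟨m + 2, by omega⟩ else ⟨i.val + 1, by omega⟩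
def b2 (m : ℕ) : Fin (m + 3) := ⟨m + 1, by omega⟩

lemma D1 (m : ℕ) : GlueData (g1 m) 0 (b1 m) := by
  constructor
  · intro i j h
    rw [Fin.lt_def] at h ⊢
    simp only [g1]
    omega
  · intro i
    refine Fin.ne_of_val_ne ?_
    simp [g1]
  · intro i
    have := i.isLt
    refine Fin.ne_of_val_ne ?_
    simp only [g1, b1]
    omega
  · refine Fin.ne_of_val_ne ?_
    simp [b1]
  · intro x
    have hx := x.isLt
    rcases eq_or_ne x.val 0 with h | h
    · left; exact Fin.ext (by simp [h])
    · rcases eq_or_ne x.val (m + 2) with h2 | h2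
      · right; left; exact Fin.ext (by simp [b1, h2])
      · right; right
        exact ⟨⟨x.val - 1, by omega⟩, Fin.ext (by simp only [g1]; omega)⟩
  · intro x; exact Fin.zero_le x
  · intro x y hx hy
    rw [Fin.lt_def] at hx hy
    simp only [b1] at hx hy
    have := x.isLt; have := y.isLt
    exact Fin.ext (by omega)
  · intro z w hz hw
    exfalso
    rw [Fin.lt_def] at hz
    simp only [b1, g1] at hz
    have := z.isLt
    omega

lemma D2 (m : ℕ) : GlueData (g2 m) 0 (b2 m) := by
  have hg2val : ∀ i : Fin (m + 1), (g2 m i).val = if i.val = m then m + 2 else i.val + 1 := by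
    intro i
    simp only [g2]
    split <;> rfl
  constructor
  · intro i j h
    rw [Fin.lt_def] at h ⊢
    rw [hg2val, hg2val]
    have := i.isLt; have := j.isLt
    split <;> split <;> omega
  · intro i
    refine Fin.ne_of_val_ne ?_
    rw [hg2val]
    simp only [Fin.val_zero]
    split <;> omega
  · intro i
    refine Fin.ne_of_val_ne ?_
    rw [hg2val]
    have := i.isLt
    simp only [b2]
    split <;> omega
  · refine Fin.ne_of_val_ne ?_
    simp [b2]
  · intro x
    have hx := x.isLt
    rcases eq_or_ne x.val 0 with h | h
    · left; exact Fin.ext (by simp [h])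
    · rcases eq_or_ne x.val (m + 1) with h2 | h2
      · right; left; exact Fin.ext (by simp [b2, h2])
      · right; right
        rcases eq_or_ne x.val (m + 2) with h3 | h3
        · exact ⟨⟨m, by omega⟩, Fin.ext (by rw [hg2val]; simp; omega)⟩
        · refine ⟨⟨x.val - 1, by omega⟩, Fin.ext ?_⟩
          rw [hg2val]
          simp only
          split <;> omega
  · intro x; exact Fin.zero_le x
  · intro x y hx hy
    rw [Fin.lt_def] at hx hy
    simp only [b2] at hx hy
    have := x.isLt; have := y.isLt
    exact Fin.ext (by omega)
  · intro z w hz hw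
    rw [Fin.lt_def] at hz hw
    simp only [b2] at hz hw
    rw [hg2val] at hz
    rw [hg2val] at hw
    have := z.isLt; have := w.isLt
    refine Fin.ext ?_
    split at hz <;> split at hw <;> omega

end Inst
noncomputable def cntS (n : ℕ) (p : ℤˣ) : ℕ :=
  Nat.card {π : Equiv.Perm (Fin n) // (∀ i, π (π i) = i) ∧ Av π ∧ Equiv.Perm.sign π = p}

lemma cntEven_eq (n : ℕ) : cntEven n = cntS n 1 := by
  unfold cntEven cntS
  rw [← Fintype.card_subtype, ← Nat.card_eq_fintype_card]
  apply Nat.card_congr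
  apply Equiv.subtypeEquivRight
  intro π
  constructor
  · rintro ⟨h1, h2, h3, h4⟩
    exact ⟨h1, (avoid_iff π).mp ⟨h2, h3⟩, (even_inversions_iff π).mp h4⟩
  · rintro ⟨h1, h2, h3⟩
    obtain ⟨o1, o2⟩ := (avoid_iff π).mpr h2
    exact ⟨h1, o1, o2, (even_inversions_iff π).mpr h3⟩

lemma cntOdd_eq (n : ℕ) : cntOdd n = cntS n (-1) := by
  unfold cntOdd cntS
  rw [← Fintype.card_subtype, ← Nat.card_eq_fintype_card]
  apply Nat.card_congr
  apply Equiv.subtypeEquivRight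
  intro π
  constructor
  · rintro ⟨h1, h2, h3, h4⟩
    exact ⟨h1, (avoid_iff π).mp ⟨h2, h3⟩, (odd_inversions_iff π).mp h4⟩
  · rintro ⟨h1, h2, h3⟩
    obtain ⟨o1, o2⟩ := (avoid_iff π).mpr h2
    exact ⟨h1, o1, o2, (odd_inversions_iff π).mpr h3⟩

lemma coverage {m : ℕ} (π : Equiv.Perm (Fin (m + 3))) (hinv : ∀ x, π (π x) = x)
    (hav : Av π) : π 0 = b1 m ∨ π 0 = b2 m := by
  by_contra hc
  push_neg at hc
  obtain ⟨h1, h2⟩ := hc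
  have hval : (π 0).val < m + 1 := by
    have hlt := (π 0).isLt
    have e1 : (π 0).val ≠ m + 2 := fun h => h1 (Fin.ext h)
    have e2 : (π 0).val ≠ m + 1 := fun h => h2 (Fin.ext h)
    omega
  have hpu : π (π (b2 m)) = b2 m := hinv _
  have hpv : π (π (b1 m)) = b1 m := hinv _
  set u := π (b2 m) with hu
  set v := π (b1 m) with hv
  have hu0 : u ≠ 0 := by
    intro h
    rw [h] at hpu
    exact h2 hpu
  have hv0 : v ≠ 0 := by
    intro h
    rw [h] at hpv
    exact h1 hpv
  have huv : u ≠ v := by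
    intro h
    rw [h, hpv] at hpu
    exact absurd (congrArg Fin.val hpu) (by simp [b1, b2])
  have hb2top : ¬ (b2 m < π 0) := by
    rw [Fin.lt_def]
    simp only [b2]
    omega
  have hb1top : ¬ (b1 m < π 0) := by
    rw [Fin.lt_def]
    simp only [b1]
    omega
  rcases lt_or_gt_of_ne huv with h | h
  · rcases hav 0 u v (Fin.pos_of_ne_zero hu0) h with hlt | hlt
    · rw [hpu] at hlt; exact hb2top hlt
    · rw [hpv] at hlt; exact hb1top hlt
  · rcases hav 0 v u (Fin.pos_of_ne_zero hv0) h with hlt | hlt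
    · rw [hpv] at hlt; exact hb1top hlt
    · rw [hpu] at hlt; exact hb2top hlt

lemma cntS_step (m : ℕ) (p : ℤˣ) : cntS (m + 3) p = 2 * cntS (m + 1) (-p) := by
  unfold cntS
  have key : ({π' : Equiv.Perm (Fin (m + 1)) // (∀ i, π' (π' i) = i) ∧ Av π' ∧
        Equiv.Perm.sign π' = -p} ⊕
      {π' : Equiv.Perm (Fin (m + 1)) // (∀ i, π' (π' i) = i) ∧ Av π' ∧
        Equiv.Perm.sign π' = -p}) ≃
      {π : Equiv.Perm (Fin (m + 3)) // (∀ i, π (π i) = i) ∧ Av π ∧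
        Equiv.Perm.sign π = p} := by
    apply Equiv.ofBijective (Sum.elim
      (fun x => ⟨(D1 m).F x.1, (D1 m).F_invol x.1 x.2.1, (D1 m).F_av x.1 x.2.2.1, by
        rw [(D1 m).F_sign, x.2.2.2, neg_neg]⟩)
      (fun x => ⟨(D2 m).F x.1, (D2 m).F_invol x.1 x.2.1, (D2 m).F_av x.1 x.2.2.1, by
        rw [(D2 m).F_sign, x.2.2.2, neg_neg]⟩))
    constructor
    · intro s t h
      match s, t with
      | Sum.inl x, Sum.inl y =>
          have := congrArg Subtype.val h
          simp only [Sum.elim_inl] at this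
          exact congrArg Sum.inl (Subtype.ext ((D1 m).F_injective this))
      | Sum.inl x, Sum.inr y =>
          exfalso
          have heq := congrArg (fun z => z.val 0) h
          simp only [Sum.elim_inl, Sum.elim_inr] at heq
          rw [(D1 m).F_apply_a, (D2 m).F_apply_a] at heq
          exact absurd (congrArg Fin.val heq) (by simp [b1, b2])
      | Sum.inr x, Sum.inl y =>
          exfalso
          have heq := congrArg (fun z => z.val 0) h
          simp only [Sum.elim_inl, Sum.elim_inr] at heq
          rw [(D1 m).F_apply_a, (D2 m).F_apply_a] at heq
          exact absurd (congrArg Fin.val heq) (by simp [b1, b2])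
      | Sum.inr x, Sum.inr y =>
          have := congrArg Subtype.val h
          simp only [Sum.elim_inr] at this
          exact congrArg Sum.inr (Subtype.ext ((D2 m).F_injective this))
    · rintro ⟨π, hinv, hav, hsgn⟩
      rcases coverage π hinv hav with h0 | h0
      · refine ⟨Sum.inl ⟨(D1 m).strip π hinv h0,
          (D1 m).strip_invol π hinv h0, (D1 m).strip_av π hinv h0 hav, ?_⟩, ?_⟩
        · have hs := (D1 m).F_sign ((D1 m).strip π hinv h0)
          rw [(D1 m).F_strip π hinv h0] at hs
          rw [← hsgn, hs, neg_neg]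
        · simp only [Sum.elim_inl]
          exact Subtype.ext ((D1 m).F_strip π hinv h0)
      · refine ⟨Sum.inr ⟨(D2 m).strip π hinv h0,
          (D2 m).strip_invol π hinv h0, (D2 m).strip_av π hinv h0 hav, ?_⟩, ?_⟩
        · have hs := (D2 m).F_sign ((D2 m).strip π hinv h0)
          rw [(D2 m).F_strip π hinv h0] at hs
          rw [← hsgn, hs, neg_neg]
        · simp only [Sum.elim_inr]
          exact Subtype.ext ((D2 m).F_strip π hinv h0)
  rw [← Nat.card_congr key, Nat.card_sum, two_mul]

lemma step_even (k : ℕ) : cntEven (k + 3) = 2 * cntOdd (k + 1) := by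
  rw [cntEven_eq, cntOdd_eq, cntS_step]

lemma step_odd (k : ℕ) : cntOdd (k + 3) = 2 * cntEven (k + 1) := by
  rw [cntOdd_eq, cntEven_eq, cntS_step, neg_neg]

lemma baseE1 : cntEven 1 = 1 := by decide
lemma baseO1 : cntOdd 1 = 0 := by decide
lemma baseE2 : cntEven 2 = 1 := by decide
lemma baseO2 : cntOdd 2 = 1 := by decide

/-- Counts of even and odd involutions avoiding 132 and 123 of lengths
4l+1, 4l+2, 4l+3, 4l+4. -/
theorem involutions_avoiding_132_123_even_odd (l : ℕ) :
    cntEven (4 * l + 1) = 2 ^ (2 * l) ∧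
    cntEven (4 * l + 2) = 2 ^ (2 * l) ∧
    cntEven (4 * l + 3) = 0 ∧
    cntEven (4 * l + 4) = 2 ^ (2 * l + 1) ∧
    cntOdd (4 * l + 1) = 0 ∧
    cntOdd (4 * l + 2) = 2 ^ (2 * l) ∧
    cntOdd (4 * l + 3) = 2 ^ (2 * l + 1) ∧
    cntOdd (4 * l + 4) = 2 ^ (2 * l + 1) := by
  induction l with
  | zero =>
      refine ⟨baseE1, baseE2, ?_, ?_, baseO1, baseO2, ?_, ?_⟩
      · rw [show 4 * 0 + 3 = 0 + 3 by norm_num, step_even, show 0 + 1 = 1 by norm_num, baseO1]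
      · rw [show 4 * 0 + 4 = 1 + 3 by norm_num, step_even, show 1 + 1 = 2 by norm_num, baseO2]; norm_num
      · rw [show 4 * 0 + 3 = 0 + 3 by norm_num, step_odd, show 0 + 1 = 1 by norm_num, baseE1]; norm_num
      · rw [show 4 * 0 + 4 = 1 + 3 by norm_num, step_odd, show 1 + 1 = 2 by norm_num, baseE2]; norm_num
  | succ l ih =>
      obtain ⟨e1, e2, e3, e4, o1, o2, o3, o4⟩ := ih
      have p2 : (2 : ℕ) ^ (2 * (l + 1)) = 4 * 2 ^ (2 * l) := by
        rw [show 2 * (l + 1) = 2 * l + 1 + 1 by ring, pow_succ, pow_succ]; ring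
      have p3 : (2 : ℕ) ^ (2 * (l + 1) + 1) = 8 * 2 ^ (2 * l) := by
        rw [show 2 * (l + 1) + 1 = 2 * l + 1 + 1 + 1 by ring, pow_succ, pow_succ, pow_succ]; ring
      have hE5 : cntEven (4 * l + 5) = 2 ^ (2 * (l + 1)) := by
        rw [show 4 * l + 5 = (4 * l + 2) + 3 by ring, step_even,
          show 4 * l + 2 + 1 = 4 * l + 3 by ring, o3, p2, pow_succ]
        ring
      have hO5 : cntOdd (4 * l + 5) = 0 := by
        rw [show 4 * l + 5 = (4 * l + 2) + 3 by ring, step_odd,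
          show 4 * l + 2 + 1 = 4 * l + 3 by ring, e3]
      have hE6 : cntEven (4 * l + 6) = 2 ^ (2 * (l + 1)) := by
        rw [show 4 * l + 6 = (4 * l + 3) + 3 by ring, step_even,
          show 4 * l + 3 + 1 = 4 * l + 4 by ring, o4, p2, pow_succ]
        ring
      have hO6 : cntOdd (4 * l + 6) = 2 ^ (2 * (l + 1)) := by
        rw [show 4 * l + 6 = (4 * l + 3) + 3 by ring, step_odd,
          show 4 * l + 3 + 1 = 4 * l + 4 by ring, e4, p2, pow_succ]
        ring
      have hE7 : cntEven (4 * l + 7) = 0 := by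
        rw [show 4 * l + 7 = (4 * l + 4) + 3 by ring, step_even,
          show 4 * l + 4 + 1 = 4 * l + 5 by ring, hO5]
      have hO7 : cntOdd (4 * l + 7) = 2 ^ (2 * (l + 1) + 1) := by
        rw [show 4 * l + 7 = (4 * l + 4) + 3 by ring, step_odd,
          show 4 * l + 4 + 1 = 4 * l + 5 by ring, hE5, p2, p3]
        ring
      have hE8 : cntEven (4 * l + 8) = 2 ^ (2 * (l + 1) + 1) := by
        rw [show 4 * l + 8 = (4 * l + 5) + 3 by ring, step_even,
          show 4 * l + 5 + 1 = 4 * l + 6 by ring, hO6, p2, p3]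
        ring
      have hO8 : cntOdd (4 * l + 8) = 2 ^ (2 * (l + 1) + 1) := by
        rw [show 4 * l + 8 = (4 * l + 5) + 3 by ring, step_odd,
          show 4 * l + 5 + 1 = 4 * l + 6 by ring, hE6, p2, p3]
        ring
      refine ⟨?_, ?_, ?_, ?_, ?_, ?_, ?_, ?_⟩
      · rw [show 4 * (l + 1) + 1 = 4 * l + 5 by ring]; exact hE5
      · rw [show 4 * (l + 1) + 2 = 4 * l + 6 by ring]; exact hE6
      · rw [show 4 * (l + 1) + 3 = 4 * l + 7 by ring]; exact hE7
      · rw [show 4 * (l + 1) + 4 = 4 * l + 8 by ring]; exact hE8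
      · rw [show 4 * (l + 1) + 1 = 4 * l + 5 by ring]; exact hO5
      · rw [show 4 * (l + 1) + 2 = 4 * l + 6 by ring]; exact hO6
      · rw [show 4 * (l + 1) + 3 = 4 * l + 7 by ring]; exact hO7
      · rw [show 4 * (l + 1) + 4 = 4 * l + 8 by ring]; exact hO8
end

section
/- For every n, there is no even involution of length n that avoids the pattern 132 and contains the pattern 231 exactly once; moreover, the number of even involutions of length n that avoid 132 and contain the pattern 2341 exactly once equals ⌊(n−7)/4⌋ + 1 for n ≥ 7, and equals 0 for n < 7. -/
open Finset

/-- The core permutation family, as a function on ℕ.  `m = 2t+3`. -/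
def gfun (t i : ℕ) : ℕ :=
  if i = 0 then 2*t+2 else if i = 2*t+2 then 0
  else if i = t ∨ i = t+1 ∨ 2*t+1 ≤ i then i else 2*t+1-i

lemma gfun_spec (t i : ℕ) :
    (i = 0 ∧ gfun t i = 2*t+2) ∨
    (i ≠ 0 ∧ i = 2*t+2 ∧ gfun t i = 0) ∨
    (i ≠ 0 ∧ i ≠ 2*t+2 ∧ (i = t ∨ i = t+1 ∨ 2*t+1 ≤ i) ∧ gfun t i = i) ∨
    (i ≠ 0 ∧ i ≠ 2*t+2 ∧ ¬(i = t ∨ i = t+1 ∨ 2*t+1 ≤ i) ∧ 1 ≤ i ∧ i ≤ 2*t ∧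
      gfun t i = 2*t+1-i) := by
  simp only [gfun]; split_ifs with h1 h2 h3 <;> [tauto; tauto; tauto; skip]
  right; right; right
  refine ⟨h1, h2, h3, by omega, by omega, rfl⟩

lemma gfun_involutive (t : ℕ) : ∀ i, gfun t (gfun t i) = i := by
  intro i
  have h1 := gfun_spec t i
  have h2 := gfun_spec t (gfun t i)
  omega

lemma gfun_lt (t n i : ℕ) (hi : i < n) (hm : 2*t+3 ≤ n) : gfun t i < n := by
  have := gfun_spec t i; omega

/-- 132-avoidance of the core family. -/
lemma gfun_no132 (t : ℕ) (i j k : ℕ) (hij : i < j) (hjk : j < k) :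
    ¬(gfun t i < gfun t k ∧ gfun t k < gfun t j) := by
  have h1 := gfun_spec t i
  have h2 := gfun_spec t j
  have h3 := gfun_spec t k
  omega

/-- uniqueness of the 2341 occurrence in the core family. -/
lemma gfun_unique2341 (t : ℕ) (ht : 1 ≤ t) (i j k l : ℕ)
    (hij : i < j) (hjk : j < k) (hkl : k < l)
    (h1 : gfun t l < gfun t i) (h2 : gfun t i < gfun t j) (h3 : gfun t j < gfun t k) :
    i = t ∧ j = t+1 ∧ k = 2*t+1 ∧ l = 2*t+2 := by
  have s1 := gfun_spec t i
  have s2 := gfun_spec t j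
  have s3 := gfun_spec t k
  have s4 := gfun_spec t l
  omega

lemma gfun_t (t : ℕ) (ht : 1 ≤ t) : gfun t t = t := by
  have := gfun_spec t t; omega
lemma gfun_t1 (t : ℕ) (ht : 1 ≤ t) : gfun t (t+1) = t+1 := by
  have := gfun_spec t (t+1); omega
lemma gfun_c (t : ℕ) (ht : 1 ≤ t) : gfun t (2*t+1) = 2*t+1 := by
  have := gfun_spec t (2*t+1); omega
lemma gfun_d (t : ℕ) (ht : 1 ≤ t) : gfun t (2*t+2) = 0 := by
  have := gfun_spec t (2*t+2); omega
lemma gfun_0 (t : ℕ) : gfun t 0 = 2*t+2 := by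
  have := gfun_spec t 0; omega

/-- The core permutation on `Fin n`. -/
def sigmaPerm (n t : ℕ) : Equiv.Perm (Fin n) :=
  Function.Involutive.toPerm
    (fun i => if h : 2*t+3 ≤ n then ⟨gfun t i, gfun_lt t n i i.2 h⟩ else i)
    (by
      intro i
      by_cases h : 2*t+3 ≤ n
      · simp only [dif_pos h]; exact Fin.ext (gfun_involutive t i)
      · simp only [dif_neg h])

lemma sigmaPerm_apply (n t : ℕ) (h : 2*t+3 ≤ n) (x : Fin n) :
    (sigmaPerm n t x : ℕ) = gfun t x := by
  simp only [sigmaPerm, Function.Involutive.coe_toPerm, dif_pos h]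

lemma sigmaPerm_involution (n t : ℕ) : ∀ i, sigmaPerm n t (sigmaPerm n t i) = i := by
  intro i; exact Function.Involutive.toPerm_involutive _ i

/-- pairing lemma : parity of card of a finset with an involution equals
parity of the number of fixed points. -/
lemma pair_card_aux {α : Type*} [DecidableEq α] (f : α → α) :
    ∀ (N : ℕ) (S : Finset α), S.card ≤ N → (∀ a ∈ S, f a ∈ S) → (∀ a ∈ S, f (f a) = a) →
      S.card % 2 = (S.filter (fun a => f a = a)).card % 2 := by
  intro N
  induction N with
  | zero =>
    intro S hcard _ _
    have : S = ∅ := Finset.card_eq_zero.mp (Nat.le_zero.mp hcard)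
    subst this; simp
  | succ N ih =>
    intro S hcard hmap hinv
    by_cases hall : ∀ a ∈ S, f a = a
    · rw [Finset.filter_true_of_mem hall]
    push_neg at hall
    obtain ⟨a, ha, hfa⟩ := hall
    have hfaS : f a ∈ S := hmap a ha
    have hfa' : f a ≠ a := hfa
    set S' := (S.erase a).erase (f a) with hS'
    have hmem : ∀ b, b ∈ S' ↔ b ∈ S ∧ b ≠ a ∧ b ≠ f a := by
      intro b
      simp only [hS', Finset.mem_erase]
      tauto
    have hcard' : S'.card = S.card - 2 := by
      rw [hS', Finset.card_erase_of_mem, Finset.card_erase_of_mem ha]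
      · omega
      · exact Finset.mem_erase.mpr ⟨hfa', hfaS⟩
    have hScard_pos : 2 ≤ S.card := by
      have hsub : ({a, f a} : Finset α) ⊆ S := by
        intro x hx
        simp only [Finset.mem_insert, Finset.mem_singleton] at hx
        rcases hx with rfl | rfl
        · exact ha
        · exact hfaS
      have h2 : ({a, f a} : Finset α).card = 2 := by
        rw [Finset.card_insert_of_notMem (by simp [Ne.symm hfa']), Finset.card_singleton]
      calc 2 = ({a, f a} : Finset α).card := h2.symm
        _ ≤ S.card := Finset.card_le_card hsub
    have hmap' : ∀ b ∈ S', f b ∈ S' := by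
      intro b hb
      rw [hmem] at hb ⊢
      obtain ⟨hbS, hba, hbfa⟩ := hb
      refine ⟨hmap b hbS, ?_, ?_⟩
      · intro h; apply hbfa; rw [← h, hinv b hbS]
      · intro h
        have := congrArg f h
        rw [hinv b hbS, hinv a ha] at this
        exact hba this
    have hinv' : ∀ b ∈ S', f (f b) = b := by
      intro b hb; exact hinv b ((hmem b).mp hb).1
    have hfilter : S'.filter (fun a => f a = a) = S.filter (fun a => f a = a) := by
      ext b
      simp only [Finset.mem_filter, hmem]
      constructor
      · rintro ⟨⟨h1, _, _⟩, h4⟩; exact ⟨h1, h4⟩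
      · rintro ⟨h1, h2⟩
        refine ⟨⟨h1, ?_, ?_⟩, h2⟩
        · rintro rfl; exact hfa h2
        · rintro rfl; rw [hinv a ha] at h2; exact hfa' h2.symm
    have := ih S' (by omega) hmap' hinv'
    rw [hfilter] at this
    omega

lemma pair_card {α : Type*} [DecidableEq α] (f : α → α) (S : Finset α)
    (hmap : ∀ a ∈ S, f a ∈ S) (hinv : ∀ a ∈ S, f (f a) = a) :
    S.card % 2 = (S.filter (fun a => f a = a)).card % 2 :=
  pair_card_aux f S.card S le_rfl hmap hinv

/-- two-cycle pairs of an involution -/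
def twoCyc {n : ℕ} (π : Equiv.Perm (Fin n)) : Finset (Fin n × Fin n) :=
  Finset.univ.filter (fun q : Fin n × Fin n => q.1 < q.2 ∧ π q.1 = q.2)

lemma inversions_parity {n : ℕ} (π : Equiv.Perm (Fin n)) (h : ∀ i, π (π i) = i) :
    inversions π % 2 = (twoCyc π).card % 2 := by
  classical
  set S := Finset.univ.filter (fun p : Fin n × Fin n => p.1 < p.2 ∧ π p.2 < π p.1) with hS
  have hmap : ∀ q ∈ S, (fun q : Fin n × Fin n => (π q.2, π q.1)) q ∈ S := by
    intro q hq
    simp only [hS, Finset.mem_filter, Finset.mem_univ, true_and] at hq ⊢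
    exact ⟨hq.2, by rw [h q.1, h q.2]; exact hq.1⟩
  have hinv2 : ∀ q ∈ S, (fun q : Fin n × Fin n => (π q.2, π q.1))
      ((fun q : Fin n × Fin n => (π q.2, π q.1)) q) = q := by
    intro q _
    simp only [h q.1, h q.2]
  have hpc := pair_card (fun q : Fin n × Fin n => (π q.2, π q.1)) S hmap hinv2
  have hfix : S.filter (fun q : Fin n × Fin n => (π q.2, π q.1) = q) = twoCyc π := by
    ext q
    simp only [hS, twoCyc, Finset.mem_filter, Finset.mem_univ, true_and, Prod.ext_iff]
    constructor
    · rintro ⟨⟨h1, _⟩, _, h4⟩; exact ⟨h1, h4⟩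
    · rintro ⟨h1, h2⟩
      have h3 : π q.2 = q.1 := by rw [← h2, h q.1]
      exact ⟨⟨h1, by rw [h2, h3]; exact h1⟩, h3, h2⟩
  rw [hfix] at hpc
  exact hpc

lemma even_inversions_iff_s17 {n : ℕ} (π : Equiv.Perm (Fin n)) (h : ∀ i, π (π i) = i) :
    Even (inversions π) ↔ Even (twoCyc π).card := by
  rw [Nat.even_iff, Nat.even_iff, inversions_parity π h]




lemma classify2341 (n : ℕ) (p : ℕ → ℕ)
    (hlt : ∀ x, x < n → p x < n)
    (hinv : ∀ x, p (p x) = x)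
    (h132 : ∀ i j k, i < j → j < k → k < n → ¬(p i < p k ∧ p k < p j))
    (A B C D : ℕ) (hAB : A < B) (hBC : B < C) (hCD : C < D) (hDn : D < n)
    (hv1 : p D < p A) (hv2 : p A < p B) (hv3 : p B < p C)
    (HU : ∀ i j k l, i < j → j < k → k < l → l < n → p l < p i → p i < p j → p j < p k →
      i = A ∧ j = B ∧ k = C ∧ l = D) :
    1 ≤ A ∧ D = 2*A+2 ∧ (∀ x, x < n → p x = gfun A x) := by
  have hinj : ∀ x y, p x = p y → x = y := by
    intro x y h
    have h1 := hinv x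
    have h2 := hinv y
    rw [h] at h1; omega
  -- (i) after C, all values exceed p C (except at D)
  have hi : ∀ k, C < k → k < n → k ≠ D → p C < p k := by
    intro k h1 h2 h3
    rcases lt_trichotomy (p k) (p A) with h | h | h
    · exact absurd (HU A B C k hAB hBC h1 h2 h hv2 hv3).2.2.2 h3
    · exact absurd (hinj _ _ h) (by omega)
    rcases lt_trichotomy (p k) (p B) with h' | h' | h'
    · exact absurd ⟨h, h'⟩ (h132 A B k hAB (by omega) h2)
    · exact absurd (hinj _ _ h') (by omega)
    rcases lt_trichotomy (p k) (p C) with h'' | h'' | h''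
    · exact absurd ⟨h', h''⟩ (h132 B C k hBC h1 h2)
    · exact absurd (hinj _ _ h'') (by omega)
    · exact h''
  -- (ii) D = C+1
  have hD : D = C + 1 := by
    by_contra hne
    have h1 := hi (C+1) (by omega) (by omega) (by omega)
    have h2 := HU A B (C+1) D hAB (by omega) (by omega) hDn hv1 hv2 (by omega)
    omega
  -- (iii) B = A+1
  have hB : B = A + 1 := by
    by_contra hne
    have hCn : C < n := by omega
    rcases lt_trichotomy (p (A+1)) (p A) with h | h | h
    · rcases lt_trichotomy (p (A+1)) (p D) with h' | h' | h'
      · exact (h132 (A+1) B D (by omega) (by omega) (by omega)) ⟨h', by omega⟩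
      · exact absurd (hinj _ _ h') (by omega)
      · have := HU (A+1) B C D (by omega) hBC hCD hDn h' (by omega) hv3
        omega
    · exact absurd (hinj _ _ h) (by omega)
    · rcases lt_trichotomy (p (A+1)) (p C) with h' | h' | h'
      · have := HU A (A+1) C D (by omega) (by omega) hCD hDn hv1 h h'
        omega
      · exact absurd (hinj _ _ h') (by omega)
      · exact (h132 A (A+1) C (by omega) (by omega) hCn) ⟨by omega, h'⟩
  -- (iv) before A, all values exceed p B
  have hlow : ∀ i, i < A → p B < p i := by
    intro i hiA
    rcases lt_trichotomy (p i) (p D) with h | h | h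
    · exact absurd ⟨h, by omega⟩ (h132 i C D (by omega) hCD hDn)
    · exact absurd (hinj _ _ h) (by omega)
    rcases lt_trichotomy (p i) (p B) with h' | h' | h'
    · have := HU i B C D (by omega) hBC hCD hDn (by omega) h' hv3
      omega
    · exact absurd (hinj _ _ h') (by omega)
    · exact h'
  -- (v) between B and C : values strictly between p D and p A
  have hmid : ∀ k, B < k → k < C → p D < p k ∧ p k < p A := by
    intro k h1 h2
    have hgood : p k < p A := by
      rcases lt_trichotomy (p k) (p A) with h | h | h
      · exact h
      · exact absurd (hinj _ _ h) (by omega)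
      rcases lt_trichotomy (p k) (p B) with h' | h' | h'
      · exact absurd ⟨h, h'⟩ (h132 A B k hAB h1 (by omega))
      · exact absurd (hinj _ _ h') (by omega)
      · have := HU A B k D hAB h1 (by omega) hDn hv1 hv2 h'
        omega
    refine ⟨?_, hgood⟩
    rcases lt_trichotomy (p k) (p D) with h | h | h
    · exact absurd ⟨h, by omega⟩ (h132 k C D h2 hCD hDn)
    · exact absurd (hinj _ _ h) (by omega)
    · exact h
  -- decreasing between B and C
  have hdec : ∀ k1 k2, B < k1 → k1 < k2 → k2 < C → p k2 < p k1 := by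
    intro k1 k2 h1 h2 h3
    rcases lt_trichotomy (p k2) (p k1) with h | h | h
    · exact h
    · exact absurd (hinj _ _ h) (by omega)
    · have hm1 := hmid k1 h1 (by omega)
      have hm2 := hmid k2 (by omega) h3
      have := HU k1 k2 C D h2 h3 hCD hDn (by omega) h (by omega)
      omega
  -- (vi) p D = 0
  have hpD : p D = 0 := by
    have h0n : 0 < n := by omega
    have hz : p (p 0) = 0 := hinv 0
    have hzn : p 0 < n := hlt 0 h0n
    rcases (by omega : p 0 < A ∨ p 0 = A ∨ p 0 = B ∨ (B < p 0 ∧ p 0 < C) ∨ p 0 = C ∨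
        p 0 = D ∨ D < p 0) with h | h | h | h | h | h | h
    · have := hlow (p 0) h; omega
    · rw [h] at hz; omega
    · rw [h] at hz; omega
    · have := hmid (p 0) h.1 h.2; omega
    · rw [h] at hz; omega
    · rw [h] at hz; omega
    · have := hi (p 0) (by omega) hzn (by omega); omega
  -- (vii)
  have hp0 : p 0 = D := by
    have := hinv D; rw [hpD] at this; exact this
  -- (viii) A ≥ 1
  have hA1 : 1 ≤ A := by
    by_contra h
    have hA0 : A = 0 := by omega
    have hpA : p A = D := by rw [hA0, hp0]
    have hCgt : D < p C := by omega
    have hCn : p C < n := hlt C (by omega)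
    have := hi (p C) (by omega) hCn (by omega)
    rw [hinv C] at this
    omega
  -- (ix) p B = p A + 1
  have hpB : p B = p A + 1 := by
    by_contra hne
    have hv : p A + 1 < p B := by omega
    have hvn : p A + 1 < n := by have := hlt B (by omega); omega
    have hz : p (p (p A + 1)) = p A + 1 := hinv (p A + 1)
    have hzn : p (p A + 1) < n := hlt _ hvn
    set z := p (p A + 1) with hzdef
    rcases (by omega : z < A ∨ z = A ∨ z = B ∨ (B < z ∧ z < C) ∨ z = C ∨
        z = D ∨ D < z) with h | h | h | h | h | h | h
    · have := hlow z h; omega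
    · rw [h] at hz; omega
    · rw [h] at hz; omega
    · have := hmid z h.1 h.2; omega
    · rw [h] at hz; omega
    · rw [h] at hz; omega
    · have := hi z (by omega) hzn (by omega); omega
  -- upper bounds in middle region
  have hub : ∀ j, 1 ≤ j → B + j < C → p (B+j) ≤ p A - j := by
    intro j
    induction j with
    | zero => omega
    | succ j ih =>
      intro h1 h2
      have e1 : p (B + (j+1)) = p (B + j + 1) := rfl
      by_cases hj : j = 0
      · subst hj
        have := hmid (B + 0 + 1) (by omega) (by omega)
        omega
      · have hprev := ih (by omega) (by omega)
        have := hdec (B+j) (B+j+1) (by omega) (by omega) h2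
        omega
  -- every value in (0, p A) is attained in the middle region
  have hposval : ∀ v, 1 ≤ v → v < p A → B < p v ∧ p v < C := by
    intro v h1 h2
    have hvn : v < n := by have := hlt A (by omega); omega
    have hz : p (p v) = v := hinv v
    have hzn : p v < n := hlt v hvn
    set z := p v with hzdef
    rcases (by omega : z < A ∨ z = A ∨ z = B ∨ (B < z ∧ z < C) ∨ z = C ∨
        z = D ∨ D < z) with h | h | h | h | h | h | h
    · have := hlow z h; omega
    · rw [h] at hz; omega
    · rw [h] at hz; omega
    · exact h
    · rw [h] at hz; omega
    · rw [h] at hz; omega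
    · have := hi z (by omega) hzn (by omega); omega
  -- exact values in the middle region
  have hform : ∀ j, 1 ≤ j → j ≤ p A - 1 → p (B+j) = p A - j ∧ B + j < C := by
    intro j
    induction j using Nat.strong_induction_on with
    | _ j ih =>
      intro h1 h2
      obtain ⟨hz1, hz2⟩ := hposval (p A - j) (by omega) (by omega)
      have hzval : p (p (p A - j)) = p A - j := hinv (p A - j)
      set z := p (p A - j) with hzdef
      have hzB : B + (z - B) = z := by omega
      have hub' := hub (z - B) (by omega) (by omega)
      rw [hzB] at hub'
      have hzle : z ≤ B + j := by omega
      have hzge : B + j ≤ z := by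
        by_contra hlt'
        have hih := (ih (z - B) (by omega) (by omega) (by omega)).1
        rw [hzB] at hih
        omega
      have hzeq : z = B + j := by omega
      rw [hzeq] at hzval hz2
      exact ⟨hzval, hz2⟩
  -- C = B + p A
  have hCeq : C = B + p A := by
    have hge : B + p A ≤ C := by
      by_cases h : p A = 1
      · omega
      · have := (hform (p A - 1) (by omega) (by omega)).2; omega
    by_contra hne
    have hgt : B + p A < C := by omega
    have hk := hmid (B + p A) (by omega) (by omega)
    have heq := (hform (p A - p (B + p A)) (by omega) (by omega)).1
    have heq2 : p (B + (p A - p (B + p A))) = p (B + p A) := by rw [heq]; omega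
    have := hinj _ _ heq2
    omega
  -- values of small positions by involution
  have hlow2 : ∀ x, 1 ≤ x → x ≤ p A - 1 → p x = B + (p A - x) := by
    intro x h1 h2
    have h3 := (hform (p A - x) (by omega) (by omega)).1
    have h' : p (B + (p A - x)) = x := by rw [h3]; omega
    have h4 := hinv (B + (p A - x))
    rw [h'] at h4
    exact h4
  -- p A = A
  have hApA : p A = A := by
    have hle : p A ≤ A := by
      by_contra h
      have := hlow2 A hA1 (by omega)
      omega
    by_contra hne
    have hq : p A < A := by omega
    have hq1 : 1 ≤ p A := by omega
    have hpq : p (p A) = A := hinv A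
    have hqlow := hlow (p A) hq
    have hA2 : p A + 2 ≤ A := by omega
    have hpq1 : p (p A + 1) = B := by
      have := hinv B; rw [hpB] at this; exact this
    rcases lt_trichotomy (p C) (A+1) with h | h | h
    · have hCne : p C ≠ A := by
        intro h'
        have : p C = p (p A) := by rw [h', hpq]
        have := hinj _ _ this
        omega
      have hwA : p C < A := by omega
      have hwq : p A + 1 < p C := by omega
      have hpw : p (p C) = C := hinv C
      have := HU (p A) (p A + 1) (p C) D (by omega) (by omega) (by omega) hDn
        (by omega) (by omega) (by omega)
      omega
    · have : p C = p (p A + 1) := by rw [h, hpq1]; omega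
      have := hinj _ _ this
      omega
    · have := HU (p A) (p A + 1) C D (by omega) (by omega) hCD hDn
        (by omega) (by omega) (by omega)
      omega
  -- p C = C
  have hpC : p C = C := by
    have hle : p C ≤ C := by
      by_contra h
      have h1 : C < p C := by omega
      rcases (by omega : p C = D ∨ D < p C) with h2 | h2
      · have : p C = p 0 := by rw [hp0, h2]
        have := hinj _ _ this
        omega
      · have hCn : p C < n := hlt C (by omega)
        have := hi (p C) (by omega) hCn (by omega)
        rw [hinv C] at this
        omega
    rcases eq_or_lt_of_le hle with h | h
    · exact h
    · have hr : B < p C := by omega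
      have := (hmid (p C) hr h).2
      rw [hinv C] at this
      omega
  -- tail is fixed
  have htail : ∀ k, D < k → k < n → p k = k := by
    intro k h1 h2
    have hgtC : p C < p k := hi k (by omega) h2 (by omega)
    have hne : p k ≠ D := by
      intro h
      have : p k = p 0 := by rw [h, hp0]
      have := hinj _ _ this
      omega
    have hgtD : D < p k := by omega
    rcases lt_trichotomy (p k) k with h | h | h
    · exact absurd ⟨by omega, by rw [hinv k]; exact h⟩ (h132 D (p k) k hgtD h h2)
    · exact h
    · have hpkn : p k < n := hlt k h2
      exact absurd ⟨by rw [hinv k]; omega, by rw [hinv k]; exact h⟩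
        (h132 D k (p k) h1 h hpkn)
  -- assemble
  refine ⟨hA1, by omega, ?_⟩
  intro x hx
  have hgs := gfun_spec A x
  rcases (by omega : x = 0 ∨ (1 ≤ x ∧ x ≤ A-1) ∨ x = A ∨ x = A+1 ∨
      (A+2 ≤ x ∧ x ≤ 2*A) ∨ x = 2*A+1 ∨ x = 2*A+2 ∨ 2*A+2 < x)
    with h | h | h | h | h | h | h | h
  · subst h; omega
  · have := hlow2 x h.1 (by omega); omega
  · subst h; omega
  · subst h
    have hpb' : p (A+1) = p B := by rw [hB]
    omega
  · have hxB : B + (x - B) = x := by omega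
    have := (hform (x - B) (by omega) (by omega)).1
    rw [hxB] at this
    omega
  · have hxC : x = C := by omega
    subst hxC; omega
  · have hxD : x = D := by omega
    subst hxD; omega
  · have := htail x (by omega) hx; omega

lemma classify231 (n : ℕ) (p : ℕ → ℕ)
    (hlt : ∀ x, x < n → p x < n)
    (hinv : ∀ x, p (p x) = x)
    (h132 : ∀ i j k, i < j → j < k → k < n → ¬(p i < p k ∧ p k < p j))
    (A B C : ℕ) (hAB : A < B) (hBC : B < C) (hCn : C < n)
    (hv1 : p C < p A) (hv2 : p A < p B)
    (HU : ∀ i j k, i < j → j < k → k < n → p k < p i → p i < p j →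
      i = A ∧ j = B ∧ k = C) :
    A = 1 ∧ B = 2 ∧ C = 3 ∧ p 0 = 3 ∧ p 1 = 1 ∧ p 2 = 2 ∧ p 3 = 0 ∧
      (∀ x, 3 < x → x < n → p x = x) := by
  have hinj : ∀ x y, p x = p y → x = y := by
    intro x y h
    have h1 := hinv x
    have h2 := hinv y
    rw [h] at h1; omega
  -- (i') after B, all values exceed p B (except at C)
  have hi : ∀ k, B < k → k < n → k ≠ C → p B < p k := by
    intro k h1 h2 h3
    rcases lt_trichotomy (p k) (p A) with h | h | h
    · exact absurd (HU A B k hAB h1 h2 h hv2).2.2 h3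
    · exact absurd (hinj _ _ h) (by omega)
    rcases lt_trichotomy (p k) (p B) with h' | h' | h'
    · exact absurd ⟨h, h'⟩ (h132 A B k hAB h1 h2)
    · exact absurd (hinj _ _ h') (by omega)
    · exact h'
  -- (ii') C = B + 1
  have hC : C = B + 1 := by
    by_contra hne
    have h1 := hi (B+1) (by omega) (by omega) (by omega)
    have h2 := HU A (B+1) C (by omega) (by omega) hCn hv1 (by omega)
    omega
  -- (iii') B = A + 1
  have hB : B = A + 1 := by
    by_contra hne
    rcases lt_trichotomy (p (A+1)) (p A) with h | h | h
    · rcases lt_trichotomy (p (A+1)) (p C) with h' | h' | h'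
      · exact absurd ⟨h', by omega⟩ (h132 (A+1) B C (by omega) hBC hCn)
      · exact absurd (hinj _ _ h') (by omega)
      · have := HU (A+1) B C (by omega) hBC hCn h' (by omega)
        omega
    · exact absurd (hinj _ _ h) (by omega)
    · have := HU A (A+1) C (by omega) (by omega) hCn hv1 h
      omega
  -- (iv') before A: all values exceed p B
  have hlow : ∀ i, i < A → p B < p i := by
    intro i hiA
    rcases lt_trichotomy (p i) (p C) with h | h | h
    · exact absurd ⟨h, by omega⟩ (h132 i B C (by omega) hBC hCn)
    · exact absurd (hinj _ _ h) (by omega)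
    rcases lt_trichotomy (p i) (p B) with h' | h' | h'
    · have := HU i B C (by omega) hBC hCn (by omega) h'
      omega
    · exact absurd (hinj _ _ h') (by omega)
    · exact h'
  -- (v') after C: all values exceed p B
  have hhigh : ∀ k, C < k → k < n → p B < p k := by
    intro k h1 h2
    rcases lt_trichotomy (p k) (p A) with h | h | h
    · have := HU A B k hAB (by omega) h2 h hv2
      omega
    · exact absurd (hinj _ _ h) (by omega)
    rcases lt_trichotomy (p k) (p B) with h' | h' | h'
    · exact absurd ⟨h, h'⟩ (h132 A B k hAB (by omega) h2)
    · exact absurd (hinj _ _ h') (by omega)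
    · exact h'
  -- (vi') p C = 0 and p 0 = C
  have hpC : p C = 0 := by
    have h0n : 0 < n := by omega
    have hz : p (p 0) = 0 := hinv 0
    have hzn : p 0 < n := hlt 0 h0n
    rcases (by omega : p 0 < A ∨ p 0 = A ∨ p 0 = B ∨ p 0 = C ∨ C < p 0)
      with h | h | h | h | h
    · have := hlow (p 0) h; omega
    · rw [h] at hz; omega
    · rw [h] at hz; omega
    · rw [h] at hz; omega
    · have := hhigh (p 0) h hzn; omega
  have hp0 : p 0 = C := by
    have := hinv C; rw [hpC] at this; exact this
  -- (vii') p A = 1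
  have hpA : p A = 1 := by
    have h1 : 1 ≤ p A := by omega
    by_contra hne
    have h2 : 2 ≤ p A := by omega
    have h1n : 1 < n := by omega
    have hz : p (p 1) = 1 := hinv 1
    have hzn : p 1 < n := hlt 1 h1n
    rcases (by omega : p 1 < A ∨ p 1 = A ∨ p 1 = B ∨ p 1 = C ∨ C < p 1)
      with h | h | h | h | h
    · have := hlow (p 1) h; omega
    · rw [h] at hz; omega
    · rw [h] at hz; omega
    · rw [h] at hz; omega
    · have := hhigh (p 1) h hzn; omega
  -- (viii') p B = 2
  have hpB : p B = 2 := by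
    by_contra hne
    have h2 : 3 ≤ p B := by omega
    have h2n : 2 < n := by omega
    have hz : p (p 2) = 2 := hinv 2
    have hzn : p 2 < n := hlt 2 h2n
    rcases (by omega : p 2 < A ∨ p 2 = A ∨ p 2 = B ∨ p 2 = C ∨ C < p 2)
      with h | h | h | h | h
    · have := hlow (p 2) h; omega
    · rw [h] at hz; omega
    · rw [h] at hz; omega
    · rw [h] at hz; omega
    · have := hhigh (p 2) h hzn; omega
  -- (ix') A = 1
  have hp1 : p 1 = A := by
    have := hinv A; rw [hpA] at this; exact this
  have hp2 : p 2 = B := by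
    have := hinv B; rw [hpB] at this; exact this
  have hA : A = 1 := by
    by_contra hne
    rcases (by omega : A = 0 ∨ 2 ≤ A) with h | h
    · rw [h] at hpA
      omega
    · have h1low := hlow 1 (by omega)
      have := HU 1 2 C (by omega) (by omega) hCn (by omega) (by omega)
      omega
  -- tail
  have htail : ∀ x, 3 < x → x < n → p x = x := by
    intro k h1 h2
    have hgtB : p B < p k := hhigh k (by omega) h2
    have hne3 : p k ≠ 3 := by
      intro h
      have : p k = p 0 := by rw [h, hp0]; omega
      have := hinj _ _ this
      omega
    have hne1 : p k ≠ 1 := by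
      intro h
      have : p k = p A := by omega
      have := hinj _ _ this; omega
    have hgt3 : 3 < p k := by omega
    rcases lt_trichotomy (p k) k with h | h | h
    · exact absurd ⟨by omega, by rw [hinv k]; exact h⟩
        (h132 1 (p k) k (by omega) h h2)
    · exact h
    · have hpkn : p k < n := hlt k h2
      exact absurd ⟨by rw [hinv k]; omega, by rw [hinv k]; exact h⟩
        (h132 1 k (p k) (by omega) h hpkn)
  have hp3 : p 3 = 0 := by
    have hC3 : C = 3 := by omega
    rw [← hC3]; exact hpC
  refine ⟨hA, by omega, by omega, by omega, by omega, by omega, hp3, htail⟩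


def fun3 {n : ℕ} (i j k : Fin n) : Fin 3 → Fin n :=
  fun a => if a.val = 0 then i else if a.val = 1 then j else k

def fun4 {n : ℕ} (i j k l : Fin n) : Fin 4 → Fin n :=
  fun a => if a.val = 0 then i else if a.val = 1 then j else if a.val = 2 then k else l

lemma mem132 {n : ℕ} (π : Equiv.Perm (Fin n)) (i j k : Fin n)
    (hij : i < j) (hjk : j < k) (h1 : π i < π k) (h2 : π k < π j) :
    (fun3 i j k) ∈ (Finset.univ.filter (fun f : Fin 3 → Fin n =>
      (∀ a b : Fin 3, a < b → f a < f b) ∧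
      (∀ a b : Fin 3, p132 a < p132 b ↔ π (f a) < π (f b)))) := by
  rw [Finset.mem_filter]
  refine ⟨Finset.mem_univ _, ?_, ?_⟩
  · intro a b hab
    simp only [Fin.lt_def] at hij hjk ⊢
    fin_cases a <;> fin_cases b <;> simp_all [fun3] <;> omega
  · intro a b
    have hv : ∀ x : Fin 3, ((p132 x : Fin 3) : ℕ) =
        if (x : ℕ) = 0 then 0 else if (x : ℕ) = 1 then 2 else 1 := by decide
    simp only [Fin.lt_def] at h1 h2 ⊢
    fin_cases a <;> fin_cases b <;> simp_all [fun3, hv] <;> omega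

lemma mem231 {n : ℕ} (π : Equiv.Perm (Fin n)) (i j k : Fin n)
    (hij : i < j) (hjk : j < k) (h1 : π k < π i) (h2 : π i < π j) :
    (fun3 i j k) ∈ (Finset.univ.filter (fun f : Fin 3 → Fin n =>
      (∀ a b : Fin 3, a < b → f a < f b) ∧
      (∀ a b : Fin 3, (finRotate 3) a < (finRotate 3) b ↔ π (f a) < π (f b)))) := by
  rw [Finset.mem_filter]
  refine ⟨Finset.mem_univ _, ?_, ?_⟩
  · intro a b hab
    simp only [Fin.lt_def] at hij hjk ⊢
    fin_cases a <;> fin_cases b <;> simp_all [fun3] <;> omega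
  · intro a b
    simp only [Fin.lt_def] at h1 h2 ⊢
    fin_cases a <;> fin_cases b <;> simp_all [fun3] <;> omega

lemma mem2341 {n : ℕ} (π : Equiv.Perm (Fin n)) (i j k l : Fin n)
    (hij : i < j) (hjk : j < k) (hkl : k < l)
    (h1 : π l < π i) (h2 : π i < π j) (h3 : π j < π k) :
    (fun4 i j k l) ∈ (Finset.univ.filter (fun f : Fin 4 → Fin n =>
      (∀ a b : Fin 4, a < b → f a < f b) ∧
      (∀ a b : Fin 4, (finRotate 4) a < (finRotate 4) b ↔ π (f a) < π (f b)))) := by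
  rw [Finset.mem_filter]
  refine ⟨Finset.mem_univ _, ?_, ?_⟩
  · intro a b hab
    simp only [Fin.lt_def] at hij hjk hkl ⊢
    fin_cases a <;> fin_cases b <;> simp_all [fun4] <;> omega
  · intro a b
    simp only [Fin.lt_def] at h1 h2 h3 ⊢
    fin_cases a <;> fin_cases b <;> simp_all [fun4] <;> omega

/-- the count of 2-cycles of the core permutation -/
lemma twoCyc_sigma (n t : ℕ) (ht : 1 ≤ t) (h : 2*t+3 ≤ n) :
    (twoCyc (sigmaPerm n t)).card = t := by
  have hn : 0 < n := by omega
  have himg : twoCyc (sigmaPerm n t) =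
      (Finset.range t).image (fun s =>
        ((⟨s % n, Nat.mod_lt s hn⟩ : Fin n),
         (⟨(if s = 0 then 2*t+2 else 2*t+1-s) % n, Nat.mod_lt _ hn⟩ : Fin n))) := by
    ext q
    simp only [twoCyc, Finset.mem_filter, Finset.mem_univ, true_and, Finset.mem_image,
      Finset.mem_range]
    constructor
    · rintro ⟨hlt', heq⟩
      have hval : gfun t (↑q.1) = (↑q.2 : ℕ) := by
        have := congrArg Fin.val heq
        rwa [sigmaPerm_apply n t h] at this
      have hq1n : (↑q.1 : ℕ) < n := q.1.isLt
      have hspec := gfun_spec t ↑q.1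
      have hlt'' : (↑q.1 : ℕ) < ↑q.2 := hlt'
      refine ⟨↑q.1, by omega, ?_⟩
      refine Prod.ext (Fin.ext ?_) (Fin.ext ?_)
      · exact Nat.mod_eq_of_lt hq1n
      · show (if (↑q.1 : ℕ) = 0 then 2*t+2 else 2*t+1-(↑q.1 : ℕ)) % n = (↑q.2 : ℕ)
        have hv2' : (if (↑q.1 : ℕ) = 0 then 2*t+2 else 2*t+1-(↑q.1 : ℕ)) = (↑q.2 : ℕ) := by
          by_cases hq0 : (↑q.1 : ℕ) = 0
          · rw [if_pos hq0]; omega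
          · rw [if_neg hq0]; omega
        rw [hv2']
        exact Nat.mod_eq_of_lt q.2.isLt
    · rintro ⟨s, hs, rfl⟩
      have hsn : s % n = s := Nat.mod_eq_of_lt (by omega)
      have hval : (if s = 0 then 2*t+2 else 2*t+1-s) % n
          = (if s = 0 then 2*t+2 else 2*t+1-s) := by
        apply Nat.mod_eq_of_lt
        by_cases hs0 : s = 0
        · rw [if_pos hs0]; omega
        · rw [if_neg hs0]; omega
      refine ⟨?_, ?_⟩
      · show (⟨s % n, _⟩ : Fin n) < ⟨(if s = 0 then 2*t+2 else 2*t+1-s) % n, _⟩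
        simp only [Fin.mk_lt_mk]
        rw [hsn, hval]
        by_cases hs0 : s = 0
        · rw [if_pos hs0]; omega
        · rw [if_neg hs0]; omega
      · apply Fin.ext
        rw [sigmaPerm_apply n t h]
        show gfun t (s % n) = (if s = 0 then 2*t+2 else 2*t+1-s) % n
        rw [hsn, hval]
        have hgs := gfun_spec t s
        by_cases hs0 : s = 0
        · rw [if_pos hs0]; subst hs0; rw [gfun_0]
        · rw [if_neg hs0]; omega
  rw [himg, Finset.card_image_of_injOn, Finset.card_range]
  intro s hs s' hs' heq
  simp only [Finset.coe_range, Set.mem_Iio] at hs hs'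
  have := congrArg (fun q : Fin n × Fin n => (q.1 : ℕ)) heq
  simp only at this
  rw [Nat.mod_eq_of_lt (by omega), Nat.mod_eq_of_lt (by omega)] at this
  exact this

/-- the core permutation avoids 132 -/
lemma sigma_occ132 (n t : ℕ) (ht : 1 ≤ t) (h : 2*t+3 ≤ n) :
    occ p132 (sigmaPerm n t) = 0 := by
  rw [occ, Finset.card_eq_zero, Finset.filter_eq_empty_iff]
  intro f _
  rintro ⟨hmono, hpat⟩
  have h01 : f 0 < f 1 := hmono 0 1 (by decide)
  have h12 : f 1 < f 2 := hmono 1 2 (by decide)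
  have hv02 : sigmaPerm n t (f 0) < sigmaPerm n t (f 2) := (hpat 0 2).mp (by decide)
  have hv21 : sigmaPerm n t (f 2) < sigmaPerm n t (f 1) := (hpat 2 1).mp (by decide)
  simp only [Fin.lt_def] at h01 h12 hv02 hv21
  rw [sigmaPerm_apply n t h, sigmaPerm_apply n t h] at hv02
  rw [sigmaPerm_apply n t h, sigmaPerm_apply n t h] at hv21
  exact gfun_no132 t ↑(f 0) ↑(f 1) ↑(f 2) h01 h12 ⟨hv02, hv21⟩

/-- the core permutation contains 2341 exactly once -/
lemma sigma_occ2341 (n t : ℕ) (ht : 1 ≤ t) (h : 2*t+3 ≤ n) :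
    occ (finRotate 4) (sigmaPerm n t) = 1 := by
  set F0 : Fin 4 → Fin n :=
    fun4 ⟨t, by omega⟩ ⟨t+1, by omega⟩ ⟨2*t+1, by omega⟩ ⟨2*t+2, by omega⟩ with hF0
  rw [occ, Finset.card_eq_one]
  refine ⟨F0, ?_⟩
  rw [Finset.eq_singleton_iff_unique_mem]
  constructor
  · apply mem2341 (sigmaPerm n t)
    · simp only [Fin.mk_lt_mk]; omega
    · simp only [Fin.mk_lt_mk]; omega
    · simp only [Fin.mk_lt_mk]; omega
    · simp only [Fin.lt_def, sigmaPerm_apply n t h]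
      rw [gfun_d t ht, gfun_t t ht]; omega
    · simp only [Fin.lt_def, sigmaPerm_apply n t h]
      rw [gfun_t t ht, gfun_t1 t ht]; omega
    · simp only [Fin.lt_def, sigmaPerm_apply n t h]
      rw [gfun_t1 t ht, gfun_c t ht]; omega
  · intro f hf
    rw [Finset.mem_filter] at hf
    obtain ⟨-, hmono, hpat⟩ := hf
    have h01 : f 0 < f 1 := hmono 0 1 (by decide)
    have h12 : f 1 < f 2 := hmono 1 2 (by decide)
    have h23 : f 2 < f 3 := hmono 2 3 (by decide)
    have hv30 : sigmaPerm n t (f 3) < sigmaPerm n t (f 0) := (hpat 3 0).mp (by decide)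
    have hv01 : sigmaPerm n t (f 0) < sigmaPerm n t (f 1) := (hpat 0 1).mp (by decide)
    have hv12 : sigmaPerm n t (f 1) < sigmaPerm n t (f 2) := (hpat 1 2).mp (by decide)
    simp only [Fin.lt_def] at h01 h12 h23 hv30 hv01 hv12
    rw [sigmaPerm_apply n t h, sigmaPerm_apply n t h] at hv30 hv01 hv12
    obtain ⟨e0, e1, e2, e3⟩ := gfun_unique2341 t ht ↑(f 0) ↑(f 1) ↑(f 2) ↑(f 3)
      h01 h12 h23 hv30 hv01 hv12
    funext a
    fin_cases a <;> (apply Fin.ext) <;> simp only [hF0, fun4] <;> norm_num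
    · exact e0
    · exact e1
    · exact e2
    · exact e3

theorem part1 (n : ℕ) :
    (Finset.univ.filter (fun π : Equiv.Perm (Fin n) =>
      (∀ i, π (π i) = i) ∧ Even (inversions π) ∧ occ p132 π = 0 ∧
        occ (finRotate 3) π = 1)).card = 0 := by
  rw [Finset.card_eq_zero, Finset.filter_eq_empty_iff]
  intro π _
  rintro ⟨hinvol, hEven, h132occ, hocc⟩
  -- set up the ℕ-level shadow of π
  set p : ℕ → ℕ := fun x => if hx : x < n then ((π ⟨x, hx⟩ : Fin n) : ℕ) else x with hpdef
  have hpcoe : ∀ x : Fin n, p ↑x = ↑(π x) := by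
    intro x
    simp only [hpdef, x.isLt, dif_pos, Fin.eta]
  have hplt : ∀ x, x < n → p x < n := by
    intro x hx
    simp only [hpdef, dif_pos hx]
    exact (π ⟨x, hx⟩).isLt
  have hpinv : ∀ x, p (p x) = x := by
    intro x
    by_cases hx : x < n
    · have e1 : p x = ↑(π ⟨x, hx⟩) := by simp only [hpdef, dif_pos hx]
      rw [e1, hpcoe (π ⟨x, hx⟩), hinvol ⟨x, hx⟩]
    · simp only [hpdef, dif_neg hx]
  -- 132-avoidance at ℕ level
  have h132nat : ∀ i j k, i < j → j < k → k < n → ¬(p i < p k ∧ p k < p j) := by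
    intro i j k hij hjk hkn
    rintro ⟨w1, w2⟩
    have hin : i < n := by omega
    have hjn : j < n := by omega
    have hmem := mem132 π ⟨i, hin⟩ ⟨j, hjn⟩ ⟨k, hkn⟩
      (by simp only [Fin.mk_lt_mk]; omega) (by simp only [Fin.mk_lt_mk]; omega)
      (by rw [Fin.lt_def, ← hpcoe ⟨i, hin⟩, ← hpcoe ⟨k, hkn⟩]; exact w1)
      (by rw [Fin.lt_def, ← hpcoe ⟨k, hkn⟩, ← hpcoe ⟨j, hjn⟩]; exact w2)
    rw [occ, Finset.card_eq_zero] at h132occ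
    rw [h132occ] at hmem
    exact absurd hmem (Finset.notMem_empty _)
  -- extract the unique 231-occurrence
  rw [occ, Finset.card_eq_one] at hocc
  obtain ⟨f, hsing⟩ := hocc
  have hfmem : f ∈ (Finset.univ.filter (fun f : Fin 3 → Fin n =>
      (∀ a b : Fin 3, a < b → f a < f b) ∧
      (∀ a b : Fin 3, (finRotate 3) a < (finRotate 3) b ↔ π (f a) < π (f b)))) := by
    rw [hsing]; exact Finset.mem_singleton_self f
  rw [Finset.mem_filter] at hfmem
  obtain ⟨-, hmono, hpat⟩ := hfmem
  have h01 : f 0 < f 1 := hmono 0 1 (by decide)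
  have h12 : f 1 < f 2 := hmono 1 2 (by decide)
  have hv20 : π (f 2) < π (f 0) := (hpat 2 0).mp (by decide)
  have hv01 : π (f 0) < π (f 1) := (hpat 0 1).mp (by decide)
  set A := (↑(f 0) : ℕ) with hAdef
  set B := (↑(f 1) : ℕ) with hBdef
  set C := (↑(f 2) : ℕ) with hCdef
  have hAB : A < B := h01
  have hBC : B < C := h12
  have hCn : C < n := (f 2).isLt
  have hv1 : p C < p A := by rw [hCdef, hAdef, hpcoe, hpcoe]; exact hv20
  have hv2 : p A < p B := by rw [hAdef, hBdef, hpcoe, hpcoe]; exact hv01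
  have HU : ∀ i j k, i < j → j < k → k < n → p k < p i → p i < p j →
      i = A ∧ j = B ∧ k = C := by
    intro i j k hij hjk hkn w1 w2
    have hin : i < n := by omega
    have hjn : j < n := by omega
    have hmem := mem231 π ⟨i, hin⟩ ⟨j, hjn⟩ ⟨k, hkn⟩
      (by simp only [Fin.mk_lt_mk]; omega) (by simp only [Fin.mk_lt_mk]; omega)
      (by rw [Fin.lt_def, ← hpcoe ⟨k, hkn⟩, ← hpcoe ⟨i, hin⟩]; exact w1)
      (by rw [Fin.lt_def, ← hpcoe ⟨i, hin⟩, ← hpcoe ⟨j, hjn⟩]; exact w2)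
    rw [hsing, Finset.mem_singleton] at hmem
    have e0 : (⟨i, hin⟩ : Fin n) = f 0 := by rw [← hmem]; rfl
    have e1 : (⟨j, hjn⟩ : Fin n) = f 1 := by rw [← hmem]; rfl
    have e2 : (⟨k, hkn⟩ : Fin n) = f 2 := by rw [← hmem]; rfl
    exact ⟨congrArg Fin.val e0, congrArg Fin.val e1, congrArg Fin.val e2⟩
  obtain ⟨hA, hB, hC, hp0, hp1, hp2, hp3, htail⟩ :=
    classify231 n p hplt hpinv h132nat A B C hAB hBC hCn hv1 hv2 HU
  -- now compute the two-cycle set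
  have h3n : 3 < n := by omega
  have h0n : 0 < n := by omega
  have htc : twoCyc π = {((⟨0, h0n⟩ : Fin n), (⟨3, h3n⟩ : Fin n))} := by
    ext q
    simp only [twoCyc, Finset.mem_filter, Finset.mem_univ, true_and, Finset.mem_singleton]
    constructor
    · rintro ⟨hlt', heq⟩
      have hval : p ↑q.1 = (↑q.2 : ℕ) := by rw [hpcoe, heq]
      have hq1 : (↑q.1 : ℕ) < ↑q.2 := hlt'
      have hq2n : (↑q.2 : ℕ) < n := q.2.isLt
      rcases (by omega : (↑q.1 : ℕ) = 0 ∨ (↑q.1 : ℕ) = 1 ∨ (↑q.1 : ℕ) = 2 ∨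
          (↑q.1 : ℕ) = 3 ∨ 3 < (↑q.1 : ℕ)) with hc | hc | hc | hc | hc
      · refine Prod.ext (Fin.ext ?_) (Fin.ext ?_)
        · exact hc
        · show (↑q.2 : ℕ) = 3
          rw [hc] at hval; omega
      · rw [hc] at hval; omega
      · rw [hc] at hval; omega
      · rw [hc] at hval; omega
      · have := htail ↑q.1 hc q.1.isLt; omega
    · rintro rfl
      refine ⟨?_, ?_⟩
      · show (⟨0, h0n⟩ : Fin n) < ⟨3, h3n⟩
        simp only [Fin.mk_lt_mk]; omega
      · show π ⟨0, h0n⟩ = ⟨3, h3n⟩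
        apply Fin.ext
        rw [← hpcoe ⟨0, h0n⟩]
        exact hp0
  have hcard1 : (twoCyc π).card = 1 := by rw [htc, Finset.card_singleton]
  have := (even_inversions_iff_s17 π hinvol).mp hEven
  rw [hcard1] at this
  exact (Nat.not_even_iff.mpr rfl) this

theorem part2 (n : ℕ) :
    (Finset.univ.filter (fun π : Equiv.Perm (Fin n) =>
      (∀ i, π (π i) = i) ∧ Even (inversions π) ∧ occ p132 π = 0 ∧
        occ (finRotate 4) π = 1)).card = if 7 ≤ n then (n - 7) / 4 + 1 else 0 := by
  set N : ℕ := if 7 ≤ n then (n - 7) / 4 + 1 else 0 with hNdef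
  have himg : (Finset.univ.filter (fun π : Equiv.Perm (Fin n) =>
      (∀ i, π (π i) = i) ∧ Even (inversions π) ∧ occ p132 π = 0 ∧
        occ (finRotate 4) π = 1)) =
      (Finset.range N).image (fun s => sigmaPerm n (2*s+2)) := by
    ext π
    simp only [Finset.mem_filter, Finset.mem_univ, true_and, Finset.mem_image,
      Finset.mem_range]
    constructor
    · rintro ⟨hinvol, hEven, h132occ, hocc⟩
      set p : ℕ → ℕ := fun x => if hx : x < n then ((π ⟨x, hx⟩ : Fin n) : ℕ) else x with hpdef
      have hpcoe : ∀ x : Fin n, p ↑x = ↑(π x) := by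
        intro x
        simp only [hpdef, x.isLt, dif_pos, Fin.eta]
      have hplt : ∀ x, x < n → p x < n := by
        intro x hx
        simp only [hpdef, dif_pos hx]
        exact (π ⟨x, hx⟩).isLt
      have hpinv : ∀ x, p (p x) = x := by
        intro x
        by_cases hx : x < n
        · have e1 : p x = ↑(π ⟨x, hx⟩) := by simp only [hpdef, dif_pos hx]
          rw [e1, hpcoe (π ⟨x, hx⟩), hinvol ⟨x, hx⟩]
        · simp only [hpdef, dif_neg hx]
      have h132nat : ∀ i j k, i < j → j < k → k < n → ¬(p i < p k ∧ p k < p j) := by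
        intro i j k hij hjk hkn
        rintro ⟨w1, w2⟩
        have hin : i < n := by omega
        have hjn : j < n := by omega
        have hmem := mem132 π ⟨i, hin⟩ ⟨j, hjn⟩ ⟨k, hkn⟩
          (by simp only [Fin.mk_lt_mk]; omega) (by simp only [Fin.mk_lt_mk]; omega)
          (by rw [Fin.lt_def, ← hpcoe ⟨i, hin⟩, ← hpcoe ⟨k, hkn⟩]; exact w1)
          (by rw [Fin.lt_def, ← hpcoe ⟨k, hkn⟩, ← hpcoe ⟨j, hjn⟩]; exact w2)
        rw [occ, Finset.card_eq_zero] at h132occ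
        rw [h132occ] at hmem
        exact absurd hmem (Finset.notMem_empty _)
      rw [occ, Finset.card_eq_one] at hocc
      obtain ⟨f, hsing⟩ := hocc
      have hfmem : f ∈ (Finset.univ.filter (fun f : Fin 4 → Fin n =>
          (∀ a b : Fin 4, a < b → f a < f b) ∧
          (∀ a b : Fin 4, (finRotate 4) a < (finRotate 4) b ↔ π (f a) < π (f b)))) := by
        rw [hsing]; exact Finset.mem_singleton_self f
      rw [Finset.mem_filter] at hfmem
      obtain ⟨-, hmono, hpat⟩ := hfmem
      have h01 : f 0 < f 1 := hmono 0 1 (by decide)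
      have h12 : f 1 < f 2 := hmono 1 2 (by decide)
      have h23 : f 2 < f 3 := hmono 2 3 (by decide)
      have hv30 : π (f 3) < π (f 0) := (hpat 3 0).mp (by decide)
      have hv01 : π (f 0) < π (f 1) := (hpat 0 1).mp (by decide)
      have hv12 : π (f 1) < π (f 2) := (hpat 1 2).mp (by decide)
      set A := (↑(f 0) : ℕ) with hAdef
      set B := (↑(f 1) : ℕ) with hBdef
      set C := (↑(f 2) : ℕ) with hCdef
      set D := (↑(f 3) : ℕ) with hDdef
      have hAB : A < B := h01
      have hBC : B < C := h12
      have hCD : C < D := h23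
      have hDn : D < n := (f 3).isLt
      have hv1 : p D < p A := by rw [hDdef, hAdef, hpcoe, hpcoe]; exact hv30
      have hv2 : p A < p B := by rw [hAdef, hBdef, hpcoe, hpcoe]; exact hv01
      have hv3 : p B < p C := by rw [hBdef, hCdef, hpcoe, hpcoe]; exact hv12
      have HU : ∀ i j k l, i < j → j < k → k < l → l < n → p l < p i → p i < p j →
          p j < p k → i = A ∧ j = B ∧ k = C ∧ l = D := by
        intro i j k l hij hjk hkl hln w1 w2 w3
        have hin : i < n := by omega
        have hjn : j < n := by omega
        have hkn : k < n := by omega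
        have hmem := mem2341 π ⟨i, hin⟩ ⟨j, hjn⟩ ⟨k, hkn⟩ ⟨l, hln⟩
          (by simp only [Fin.mk_lt_mk]; omega) (by simp only [Fin.mk_lt_mk]; omega)
          (by simp only [Fin.mk_lt_mk]; omega)
          (by rw [Fin.lt_def, ← hpcoe ⟨l, hln⟩, ← hpcoe ⟨i, hin⟩]; exact w1)
          (by rw [Fin.lt_def, ← hpcoe ⟨i, hin⟩, ← hpcoe ⟨j, hjn⟩]; exact w2)
          (by rw [Fin.lt_def, ← hpcoe ⟨j, hjn⟩, ← hpcoe ⟨k, hkn⟩]; exact w3)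
        rw [hsing, Finset.mem_singleton] at hmem
        have e0 : (⟨i, hin⟩ : Fin n) = f 0 := by rw [← hmem]; rfl
        have e1 : (⟨j, hjn⟩ : Fin n) = f 1 := by rw [← hmem]; rfl
        have e2 : (⟨k, hkn⟩ : Fin n) = f 2 := by rw [← hmem]; rfl
        have e3 : (⟨l, hln⟩ : Fin n) = f 3 := by rw [← hmem]; rfl
        exact ⟨congrArg Fin.val e0, congrArg Fin.val e1, congrArg Fin.val e2,
          congrArg Fin.val e3⟩
      obtain ⟨hA1, hDeq, hform⟩ :=
        classify2341 n p hplt hpinv h132nat A B C D hAB hBC hCD hDn hv1 hv2 hv3 HU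
      have hbound : 2*A+3 ≤ n := by omega
      have hpi : π = sigmaPerm n A := by
        apply Equiv.ext
        intro x
        apply Fin.ext
        rw [← hpcoe x, sigmaPerm_apply n A hbound x]
        exact hform ↑x x.isLt
      have hEvenA : Even A := by
        rw [hpi] at hEven
        have := (even_inversions_iff_s17 (sigmaPerm n A) (sigmaPerm_involution n A)).mp hEven
        rwa [twoCyc_sigma n A hA1 hbound] at this
      obtain ⟨c, hc⟩ := hEvenA
      have hc1 : 1 ≤ c := by omega
      refine ⟨c - 1, ?_, ?_⟩
      · have hN : N = (n - 7) / 4 + 1 := if_pos (by omega)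
        omega
      · have : 2*(c-1)+2 = A := by omega
        rw [this, hpi]
    · rintro ⟨s, hs, rfl⟩
      have hN7 : 7 ≤ n ∧ s ≤ (n-7)/4 := by
        by_cases h7 : 7 ≤ n
        · rw [hNdef, if_pos h7] at hs; omega
        · rw [hNdef, if_neg h7] at hs; omega
      have hbound : 2*(2*s+2)+3 ≤ n := by omega
      have ht1 : 1 ≤ 2*s+2 := by omega
      refine ⟨sigmaPerm_involution n (2*s+2), ?_, sigma_occ132 n (2*s+2) ht1 hbound,
        sigma_occ2341 n (2*s+2) ht1 hbound⟩
      rw [even_inversions_iff_s17 _ (sigmaPerm_involution n (2*s+2)),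
        twoCyc_sigma n (2*s+2) ht1 hbound]
      exact ⟨s+1, by omega⟩
  rw [himg, Finset.card_image_of_injOn, Finset.card_range]
  intro s hs s' hs' heq
  simp only [Finset.coe_range, Set.mem_Iio] at hs hs'
  have h7 : 7 ≤ n := by
    by_contra h7
    rw [hNdef, if_neg h7] at hs
    omega
  have hN : N = (n-7)/4 + 1 := by rw [hNdef, if_pos h7]
  have h0n : 0 < n := by omega
  have hb : 2*(2*s+2)+3 ≤ n := by omega
  have hb' : 2*(2*s'+2)+3 ≤ n := by omega
  have := congrArg (fun e : Equiv.Perm (Fin n) => ((e ⟨0, h0n⟩ : Fin n) : ℕ)) heq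
  simp only at this
  rw [sigmaPerm_apply n (2*s+2) hb, sigmaPerm_apply n (2*s'+2) hb'] at this
  simp only [gfun_0] at this
  omega

/-- No even involution avoids 132 and contains 231 exactly once; and the
number of even involutions of length n avoiding 132 and containing 2341
exactly once is ⌊(n−7)/4⌋+1 for n ≥ 7, else 0. -/
theorem even_involutions_avoiding_132_containing_231_or_2341_once (n : ℕ) :
    (Finset.univ.filter (fun π : Equiv.Perm (Fin n) =>
      (∀ i, π (π i) = i) ∧ Even (inversions π) ∧ occ p132 π = 0 ∧
        occ (finRotate 3) π = 1)).card = 0 ∧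
    (Finset.univ.filter (fun π : Equiv.Perm (Fin n) =>
      (∀ i, π (π i) = i) ∧ Even (inversions π) ∧ occ p132 π = 0 ∧
        occ (finRotate 4) π = 1)).card
      = if 7 ≤ n then (n - 7) / 4 + 1 else 0 :=
  ⟨part1 n, part2 n⟩
end
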